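/- arXiv:0808.0835 — 6 statements merged into one kernel-verified Lean document; each statement's English description precedes it below -/
import Mathlib

section
/- With the setup of the previous statement (an a.e.-invertible measurable map f : D → R with both Radon–Nikodym derivatives Φ_f on D and Φ_{f⁻¹} on R existing), define the bounded operator S on L²(X,μ) by (Sφ)(x) = χ_R(x)·Φ_{f⁻¹}(x)^{1/2}·φ(F(x)), where F = f⁻¹ on R (extended arbitrarily off R). Then the adjoint of S is given by (S*ψ)(x) = χ_D(x)·Φ_f(x)^{1/2}·ψ(f(x)) for all ψ ∈ L²(X,μ). -/
open MeasureTheory Set ENNReal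

/-- the adjoint of S, (Sφ)(x) = χ_R(x)·Φ_{f⁻¹}(x)^{1/2}·φ(F(x)), is
(S*ψ)(x) = χ_D(x)·Φ_f(x)^{1/2}·ψ(f(x)). -/
theorem stmt3 {X : Type*} [MeasurableSpace X] (μ : Measure X) [SigmaFinite μ]
    (D R : Set X) (hD : MeasurableSet D) (hR : MeasurableSet R)
    (f F : X → X) (hf : Measurable f) (hF : Measurable F)
    (hbij : Set.BijOn f D R) (hinv : Set.InvOn F f D R)
    (Φf Φfinv : X → ℝ≥0∞) (hΦf : Measurable Φf) (hΦfinv : Measurable Φfinv)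
    (hΦfzero : ∀ x ∉ D, Φf x = 0) (hΦfinvzero : ∀ x ∉ R, Φfinv x = 0)
    (hrnf : ∀ E : Set X, MeasurableSet E → E ⊆ D → μ (f '' E) = ∫⁻ x in E, Φf x ∂μ)
    (hrnfinv : ∀ E : Set X, MeasurableSet E → E ⊆ R →
      μ (F '' E) = ∫⁻ x in E, Φfinv x ∂μ)
    (S : Lp ℂ 2 μ →L[ℂ] Lp ℂ 2 μ)
    (hS : ∀ φ : Lp ℂ 2 μ,
      (S φ : X → ℂ) =ᵐ[μ] R.indicator fun x => (Real.sqrt (Φfinv x).toReal : ℂ) * φ (F x)) :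
    ∀ ψ : Lp ℂ 2 μ,
      (ContinuousLinearMap.adjoint S ψ : X → ℂ)
        =ᵐ[μ] D.indicator fun x => (Real.sqrt (Φf x).toReal : ℂ) * ψ (f x) := by
  intro ψ
  classical
  set ν : Measure X := (μ.restrict D).withDensity Φf with hν
  -- the image identity
  have himg : ∀ E : Set X, f '' (f ⁻¹' E ∩ D) = E ∩ R := by
    intro E
    ext y
    constructor
    · rintro ⟨x, ⟨hxE, hxD⟩, rfl⟩; exact ⟨hxE, hbij.mapsTo hxD⟩
    · rintro ⟨hyE, hyR⟩
      obtain ⟨x, hxD, rfl⟩ := hbij.surjOn hyR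
      exact ⟨x, ⟨hyE, hxD⟩, rfl⟩
  -- pushforward identity
  have hmap : ν.map f = μ.restrict R := by
    ext E hE
    rw [Measure.map_apply hf hE, hν, withDensity_apply _ (hf hE),
      Measure.restrict_restrict (hf hE), Measure.restrict_apply hE,
      ← hrnf _ ((hf hE).inter hD) inter_subset_right, himg, inter_comm]
  -- change of variables for lintegrals
  have hA : ∀ g : X → ℝ≥0∞, Measurable g →
      ∫⁻ y in R, g y ∂μ = ∫⁻ x in D, Φf x * g (f x) ∂μ := by
    intro g hg
    calc ∫⁻ y in R, g y ∂μ = ∫⁻ y, g y ∂(ν.map f) := by rw [hmap]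
      _ = ∫⁻ x, g (f x) ∂ν := lintegral_map hg hf
      _ = ∫⁻ x, Φf x * g (f x) ∂(μ.restrict D) :=
          lintegral_withDensity_eq_lintegral_mul _ hΦf (hg.comp hf)
  -- key: Φf x * Φfinv (f x) = 1 a.e. on D
  have hB : (fun _ => (1 : ℝ≥0∞)) =ᵐ[μ.restrict D] fun x => Φf x * Φfinv (f x) := by
    have h1 : ∀ A : Set X, MeasurableSet A →
        μ (A ∩ D) = ∫⁻ x in A ∩ D, Φf x * Φfinv (f x) ∂μ := by
      intro A hA'
      have hADm : MeasurableSet (A ∩ D) := hA'.inter hD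
      have hEim : f '' (A ∩ D) = F ⁻¹' (A ∩ D) ∩ R := by
        ext y
        constructor
        · rintro ⟨x, hx, rfl⟩
          refine ⟨?_, hbij.mapsTo hx.2⟩
          rwa [mem_preimage, hinv.1 hx.2]
        · rintro ⟨hy, hyR⟩
          exact ⟨F y, hy, hinv.2 hyR⟩
      have hEm : MeasurableSet (f '' (A ∩ D)) := by
        rw [hEim]; exact (hF hADm).inter hR
      have hEsub : f '' (A ∩ D) ⊆ R :=
        (Set.image_mono inter_subset_right).trans hbij.image_eq.subset
      have hback : F '' (f '' (A ∩ D)) = A ∩ D := by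
        rw [← Set.image_comp]
        apply Set.EqOn.image_eq_self
        intro x hx
        exact hinv.1 hx.2
      have step1 : μ (A ∩ D) = ∫⁻ y in f '' (A ∩ D), Φfinv y ∂μ := by
        conv_lhs => rw [← hback]
        exact hrnfinv _ hEm hEsub
      have step2 : ∫⁻ y in f '' (A ∩ D), Φfinv y ∂μ
          = ∫⁻ y in R, (f '' (A ∩ D)).indicator Φfinv y ∂μ := by
        rw [lintegral_indicator hEm, Measure.restrict_restrict hEm,
          inter_eq_self_of_subset_left hEsub]
      have step3 : ∫⁻ y in R, (f '' (A ∩ D)).indicator Φfinv y ∂μ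
          = ∫⁻ x in D, Φf x * ((f '' (A ∩ D)).indicator Φfinv) (f x) ∂μ :=
        hA _ (hΦfinv.indicator hEm)
      have step4 : ∫⁻ x in D, Φf x * ((f '' (A ∩ D)).indicator Φfinv) (f x) ∂μ
          = ∫⁻ x in D, (A ∩ D).indicator (fun x => Φf x * Φfinv (f x)) x ∂μ := by
        apply setLIntegral_congr_fun hD
        intro x hxD
        dsimp only
        by_cases hx : x ∈ A ∩ D
        · rw [Set.indicator_of_mem hx, Set.indicator_of_mem (Set.mem_image_of_mem f hx)]
        · rw [Set.indicator_of_notMem hx, Set.indicator_of_notMem, mul_zero]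
          rintro ⟨x', hx', hfx⟩
          exact hx (hbij.injOn hx'.2 hxD hfx ▸ hx')
      have step5 : ∫⁻ x in D, (A ∩ D).indicator (fun x => Φf x * Φfinv (f x)) x ∂μ
          = ∫⁻ x in A ∩ D, Φf x * Φfinv (f x) ∂μ := by
        rw [lintegral_indicator hADm, Measure.restrict_restrict hADm,
          inter_eq_self_of_subset_left inter_subset_right]
      rw [step1, step2, step3, step4, step5]
    refine ae_eq_of_forall_setLIntegral_eq_of_sigmaFinite measurable_const
      (hΦf.mul (hΦfinv.comp hf)) (fun s hs _ => ?_)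
    rw [setLIntegral_one, Measure.restrict_restrict hs, Measure.restrict_apply hs]
    exact h1 s hs
  have hB' : ∀ᵐ x ∂μ, x ∈ D → Φf x * Φfinv (f x) = 1 := by
    rw [← ae_restrict_iff' hD]
    exact hB.symm.mono fun x hx => hx
  -- Φf is finite a.e. on D
  have hfin : ∀ᵐ x ∂μ, x ∈ D → Φf x ≠ ∞ := by
    filter_upwards [hB'] with x hx hxD htop
    have h1 := hx hxD
    rw [htop] at h1
    rcases eq_or_ne (Φfinv (f x)) 0 with h0 | h0
    · rw [h0, mul_zero] at h1; exact zero_ne_one h1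
    · rw [ENNReal.top_mul h0] at h1; exact ENNReal.top_ne_one h1
  -- the square-root identity, a.e. on D
  have hsqrtR : ∀ᵐ x ∂μ, x ∈ D →
      Real.sqrt (Φf x).toReal
        = (Φf x).toReal * Real.sqrt ((Φfinv (f x)).toReal) := by
    filter_upwards [hB', hfin] with x hx hfinx hxD
    have h1 := hx hxD
    have hta : Φf x ≠ ∞ := hfinx hxD
    have hts : (Φf x).toReal * (Φfinv (f x)).toReal = 1 := by
      have htb : Φfinv (f x) ≠ ∞ := by
        intro hb
        rw [hb] at h1
        rcases eq_or_ne (Φf x) 0 with h0 | h0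
        · rw [h0, zero_mul] at h1; exact zero_ne_one h1
        · rw [ENNReal.mul_top h0] at h1; exact ENNReal.top_ne_one h1
      rw [← ENNReal.toReal_mul, h1, ENNReal.toReal_one]
    set t := (Φf x).toReal with htdef
    have ht0 : 0 < t := by
      rcases (ENNReal.toReal_nonneg : 0 ≤ t).lt_or_eq with h | h
      · exact h
      · exfalso
        rw [← htdef] at h
        rw [← h, zero_mul] at hts
        exact zero_ne_one hts
    have hs := eq_inv_of_mul_eq_one_right hts
    rw [hs, Real.sqrt_inv, eq_comm,
      mul_inv_eq_iff_eq_mul₀ (Real.sqrt_pos.mpr ht0).ne']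
    exact (Real.mul_self_sqrt ht0.le).symm
  -- the candidate function
  set g : X → ℂ := D.indicator fun x => ((Real.sqrt (Φf x).toReal : ℝ) : ℂ) * ψ (f x)
    with hgdef
  have hψm : StronglyMeasurable ((ψ : Lp ℂ 2 μ) : X → ℂ) := Lp.stronglyMeasurable ψ
  have hsqfm : Measurable fun x => ((Real.sqrt (Φf x).toReal : ℝ) : ℂ) :=
    Complex.measurable_ofReal.comp
      (Real.continuous_sqrt.measurable.comp hΦf.ennreal_toReal)
  have hgm : StronglyMeasurable g :=
    (hsqfm.stronglyMeasurable.mul (hψm.comp_measurable hf)).indicator hD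
  -- pointwise: squared norm of g
  have hnorm : (fun x => (‖g x‖₊ : ℝ≥0∞) ^ 2)
      =ᵐ[μ] D.indicator fun x => Φf x * (‖((ψ : Lp ℂ 2 μ) : X → ℂ) (f x)‖₊ : ℝ≥0∞) ^ 2 := by
    filter_upwards [hfin] with x hfinx
    by_cases hxD : x ∈ D
    · rw [hgdef, Set.indicator_of_mem hxD, Set.indicator_of_mem hxD, nnnorm_mul,
        ENNReal.coe_mul, mul_pow]
      congr 1
      rw [Complex.nnnorm_real, ← enorm_eq_nnnorm, Real.enorm_eq_ofReal (Real.sqrt_nonneg _), sq,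
        ← ENNReal.ofReal_mul (Real.sqrt_nonneg _),
        Real.mul_self_sqrt ENNReal.toReal_nonneg,
        ENNReal.ofReal_toReal (hfinx hxD)]
    · simp [hgdef, Set.indicator_of_notMem hxD]
  have hψ2 : ∫⁻ y, (‖((ψ : Lp ℂ 2 μ) : X → ℂ) y‖₊ : ℝ≥0∞) ^ 2 ∂μ < ∞ := by
    have h := (Lp.memLp ψ).2
    rw [eLpNorm_eq_lintegral_rpow_enorm_toReal two_ne_zero ENNReal.ofNat_ne_top] at h
    simp only [ENNReal.toReal_ofNat, ENNReal.rpow_two, enorm_eq_nnnorm] at h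
    by_contra hcon
    rw [not_lt, top_le_iff] at hcon
    rw [hcon, ENNReal.top_rpow_of_pos (by norm_num)] at h
    exact (lt_irrefl _ h)
  have hint : ∫⁻ x, (‖g x‖₊ : ℝ≥0∞) ^ 2 ∂μ
      = ∫⁻ y in R, (‖((ψ : Lp ℂ 2 μ) : X → ℂ) y‖₊ : ℝ≥0∞) ^ 2 ∂μ := by
    rw [lintegral_congr_ae hnorm, lintegral_indicator hD]
    exact (hA _ (hψm.measurable.nnnorm.coe_nnreal_ennreal.pow_const 2)).symm
  have hmem : MemLp g 2 μ := by
    refine ⟨hgm.aestronglyMeasurable, ?_⟩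
    rw [eLpNorm_eq_lintegral_rpow_enorm_toReal two_ne_zero ENNReal.ofNat_ne_top]
    simp only [ENNReal.toReal_ofNat, ENNReal.rpow_two, enorm_eq_nnnorm]
    refine ENNReal.rpow_lt_top_of_nonneg (by norm_num) ?_
    rw [hint]
    exact ((setLIntegral_le_lintegral _ _).trans_lt hψ2).ne
  -- Bochner change of variables
  have hfinD : ∀ᵐ x ∂(μ.restrict D), Φf x ≠ ∞ := by
    rw [ae_restrict_iff' hD]; exact hfin
  have hν' : ν = (μ.restrict D).withDensity fun x => ((Φf x).toNNReal : ℝ≥0∞) := by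
    rw [hν]
    exact withDensity_congr_ae
      (hfinD.mono fun x hx => (ENNReal.coe_toNNReal hx).symm)
  have hCoV : ∀ h : X → ℂ, AEStronglyMeasurable h (μ.restrict R) →
      ∫ y in R, h y ∂μ = ∫ x in D, (Φf x).toReal • h (f x) ∂μ := by
    intro h hh
    rw [← hmap] at hh
    calc ∫ y in R, h y ∂μ = ∫ y, h y ∂(ν.map f) := by rw [hmap]
      _ = ∫ x, h (f x) ∂ν := integral_map hf.aemeasurable hh
      _ = ∫ x, (Φf x).toNNReal • h (f x) ∂(μ.restrict D) := by
          rw [hν', integral_withDensity_eq_integral_smul hΦf.ennreal_toNNReal]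
      _ = ∫ x in D, (Φf x).toReal • h (f x) ∂μ := by
          simp_rw [NNReal.smul_def]; rfl
  -- the inner-product identity
  have key : ∀ φ : Lp ℂ 2 μ,
      (inner ℂ (MemLp.toLp g hmem) φ : ℂ)
        = inner ℂ ((ContinuousLinearMap.adjoint S) ψ) φ := by
    intro φ
    have hφm : StronglyMeasurable ((φ : Lp ℂ 2 μ) : X → ℂ) := Lp.stronglyMeasurable φ
    rw [ContinuousLinearMap.adjoint_inner_left, MeasureTheory.L2.inner_def,
      MeasureTheory.L2.inner_def]
    simp_rw [RCLike.inner_apply, mul_comm ((φ : X → ℂ) _), mul_comm ((S φ : X → ℂ) _)]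
    have hL : ∫ a, (starRingEnd ℂ) ((MemLp.toLp g hmem : X → ℂ) a) * φ a ∂μ
        = ∫ x in D, (starRingEnd ℂ)
            (((Real.sqrt (Φf x).toReal : ℝ) : ℂ) * ψ (f x)) * φ x ∂μ := by
      rw [integral_congr_ae
        ((hmem.coeFn_toLp.mono fun a ha => by dsimp only; rw [ha]) :
          (fun a => (starRingEnd ℂ) ((MemLp.toLp g hmem : X → ℂ) a) * φ a)
            =ᵐ[μ] fun a => (starRingEnd ℂ) (g a) * φ a)]
      rw [← integral_indicator hD]
      congr 1
      ext a
      by_cases haD : a ∈ D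
      · rw [hgdef, Set.indicator_of_mem haD, Set.indicator_of_mem haD]
      · rw [hgdef, Set.indicator_of_notMem haD, Set.indicator_of_notMem haD,
          map_zero, zero_mul]
    have hRr : ∫ a, (starRingEnd ℂ) (ψ a) * (S φ : X → ℂ) a ∂μ
        = ∫ a in R, (starRingEnd ℂ) (ψ a)
            * (((Real.sqrt (Φfinv a).toReal : ℝ) : ℂ) * φ (F a)) ∂μ := by
      rw [integral_congr_ae ((hS φ).mono fun a ha => by rw [ha])]
      rw [← integral_indicator hR]
      congr 1
      ext a
      by_cases haR : a ∈ R
      · rw [Set.indicator_of_mem haR, Set.indicator_of_mem haR]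
      · rw [Set.indicator_of_notMem haR, Set.indicator_of_notMem haR, mul_zero]
    rw [hL, hRr]
    have hmeas : AEStronglyMeasurable
        (fun a => (starRingEnd ℂ) (ψ a)
          * (((Real.sqrt (Φfinv a).toReal : ℝ) : ℂ) * φ (F a))) (μ.restrict R) := by
      have hsqfim : Measurable fun a => ((Real.sqrt (Φfinv a).toReal : ℝ) : ℂ) :=
        Complex.measurable_ofReal.comp
          (Real.continuous_sqrt.measurable.comp hΦfinv.ennreal_toReal)
      exact (((Complex.continuous_conj.comp_stronglyMeasurable hψm).mul
        (hsqfim.stronglyMeasurable.mul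
          (hφm.comp_measurable hF))).aestronglyMeasurable).restrict
    rw [hCoV _ hmeas]
    refine (setIntegral_congr_ae hD ?_)
    filter_upwards [hsqrtR] with x hx hxD
    rw [hinv.1 hxD, hx hxD]
    simp only [Complex.ofReal_mul, map_mul, Complex.conj_ofReal, Complex.real_smul]
    ring
  have heq : MemLp.toLp g hmem = (ContinuousLinearMap.adjoint S) ψ :=
    ext_inner_right ℂ key
  rw [← heq]
  exact hmem.coeFn_toLp
end

section
/- Let (X,μ) be a σ-finite measure space, F : X → X nonsingular, D, R ⊆ X measurable, and f : D → R measurable with f(D) =_{μ-a.e.} R, F∘f = id_D μ-a.e., and μ∘f ≪ μ on D with derivative Φ_f. Then for every nonnegative φ ∈ L¹(X,μ) with support contained in R (up to null sets) and every measurable set E ⊆ X: ∫_E χ_D(x)·Φ_f(x)·φ(f(x)) dμ(x) = ∫_{F⁻¹(E)} φ dμ. Consequently, the Perron–Frobenius operator P_F satisfies P_F(φ) = χ_D·Φ_f·(φ ∘ f) μ-a.e. -/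
open MeasureTheory Set ENNReal

/-- for φ ≥ 0 in L¹ supported in R (up to null sets),
∫_E χ_D·Φ_f·(φ∘f) dμ = ∫_{F⁻¹(E)} φ dμ for all measurable E; consequently the
Perron–Frobenius operator satisfies P_F(φ) = χ_D·Φ_f·(φ∘f) μ-a.e. -/
theorem stmt10 {X : Type*} [MeasurableSpace X] (μ : Measure X) [SigmaFinite μ]
    (F : X → X) (hF : Measurable F) (hns : ∀ N : Set X, μ N = 0 → μ (F ⁻¹' N) = 0)
    (D R : Set X) (hD : MeasurableSet D) (hR : MeasurableSet R)
    (f : X → X) (hf : Measurable f) (hmaps : Set.MapsTo f D R)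
    (himg : μ (f '' D \ R) = 0 ∧ μ (R \ f '' D) = 0)
    (hinv : ∀ᵐ x ∂μ.restrict D, F (f x) = x)
    (Φf : X → ℝ≥0∞) (hΦf : Measurable Φf) (hΦfzero : ∀ x ∉ D, Φf x = 0)
    (hrnf : ∀ E : Set X, MeasurableSet E → E ⊆ D → μ (f '' E) = ∫⁻ x in E, Φf x ∂μ)
    (φ : X → ℝ) (hφ : Integrable φ μ) (hφ0 : 0 ≤ᵐ[μ] φ)
    (hsupp : μ (Function.support φ \ R) = 0) :
    (∀ E : Set X, MeasurableSet E →
      ∫ x in E, D.indicator (fun x => (Φf x).toReal * φ (f x)) x ∂μ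
        = ∫ x in F ⁻¹' E, φ x ∂μ) ∧
    (∀ P : X → ℝ, Integrable P μ →
      (∀ E : Set X, MeasurableSet E → ∫ x in E, P x ∂μ = ∫ x in F ⁻¹' E, φ x ∂μ) →
      P =ᵐ[μ] D.indicator fun x => (Φf x).toReal * φ (f x)) := by
  classical
  -- measurable representative of φ
  set φ' : X → ℝ := hφ.1.mk φ with hφ'def
  have hφ'meas : StronglyMeasurable φ' := hφ.1.stronglyMeasurable_mk
  have hφeq : φ =ᵐ[μ] φ' := hφ.1.ae_eq_mk
  set g : X → ℝ≥0∞ := fun y => ENNReal.ofReal (φ' y) with hgdef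
  have hg : Measurable g := ENNReal.measurable_ofReal.comp hφ'meas.measurable
  have hgfin : ∀ y, g y < ∞ := fun y => ENNReal.ofReal_lt_top
  -- the measure ν = Φf · (μ restricted to D), and its pushforward under f
  set ν : Measure X := (μ.restrict D).withDensity Φf with hνdef
  have claimA : Measure.map f ν = μ.restrict R := by
    ext A hA
    rw [Measure.map_apply hf hA, Measure.restrict_apply hA, hνdef,
      withDensity_apply _ (hf hA), Measure.restrict_restrict (hf hA),
      ← hrnf _ ((hf hA).inter hD) inter_subset_right]
    have himgeq : f '' (f ⁻¹' A ∩ D) = A ∩ f '' D := by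
      ext y
      constructor
      · rintro ⟨x, ⟨hxA, hxD⟩, rfl⟩
        exact ⟨hxA, x, hxD, rfl⟩
      · rintro ⟨hyA, x, hxD, rfl⟩
        exact ⟨x, ⟨hyA, hxD⟩, rfl⟩
    rw [himgeq]
    apply measure_congr
    rw [MeasureTheory.ae_eq_set]
    constructor
    · refine measure_mono_null ?_ himg.1
      intro y hy
      exact ⟨hy.1.2, fun h => hy.2 ⟨hy.1.1, h⟩⟩
    · refine measure_mono_null ?_ himg.2
      intro y hy
      exact ⟨hy.1.2, fun h => hy.2 ⟨hy.1.1, h⟩⟩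
  -- Φf is a.e. finite on D (uses σ-finiteness)
  have hfin : ∀ᵐ x ∂μ.restrict D, Φf x ≠ ∞ := by
    set S : Set X := D ∩ Φf ⁻¹' {∞} with hSdef
    have hSmeas : MeasurableSet S := hD.inter (hΦf (measurableSet_singleton _))
    have hEnull : ∀ n, μ (S ∩ f ⁻¹' spanningSets μ n) = 0 := by
      intro n
      set En : Set X := S ∩ f ⁻¹' spanningSets μ n with hEndef
      have hEnmeas : MeasurableSet En :=
        hSmeas.inter (hf (measurableSet_spanningSets μ n))
      have h1 : μ (f '' En) = ∫⁻ x in En, Φf x ∂μ :=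
        hrnf En hEnmeas fun x hx => hx.1.1
      have h2 : ∫⁻ x in En, Φf x ∂μ = ∞ * μ En := by
        rw [setLIntegral_congr_fun hEnmeas
          (fun x (hx : x ∈ En) => (hx.1.2 : Φf x = ∞)),
          setLIntegral_const]
      have h3 : μ (f '' En) ≤ μ (spanningSets μ n) := by
        refine measure_mono ?_
        rintro y ⟨x, hx, rfl⟩
        exact hx.2
      by_contra hcon
      have h4 : μ (f '' En) = ∞ := by
        rw [h1, h2, ENNReal.top_mul hcon]
      rw [h4] at h3
      exact ((measure_spanningSets_lt_top μ n).ne (top_le_iff.1 h3)).elim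
    have hSnull : μ S = 0 := by
      refine measure_mono_null ?_ (measure_iUnion_null hEnull)
      intro x hx
      have hfx : f x ∈ ⋃ n, spanningSets μ n := by
        rw [iUnion_spanningSets]; trivial
      obtain ⟨n, hn⟩ := mem_iUnion.1 hfx
      exact mem_iUnion.2 ⟨n, hx, hn⟩
    rw [ae_restrict_iff' hD, ae_iff]
    refine measure_mono_null ?_ hSnull
    intro x hx
    simp only [mem_setOf_eq, not_forall, not_not] at hx
    exact ⟨hx.1, hx.2⟩
  -- key lemma: Φf vanishes a.e. on the preimage of a null set
  have hkey : ∀ N : Set X, MeasurableSet N → μ N = 0 →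
      ∀ᵐ x ∂μ.restrict D, Φf x = 0 ∨ f x ∉ N := by
    intro N hN hNnull
    have hAmeas : MeasurableSet (D ∩ f ⁻¹' N) := hD.inter (hf hN)
    have h0 : ∫⁻ x in D ∩ f ⁻¹' N, Φf x ∂μ = 0 := by
      rw [← hrnf _ hAmeas inter_subset_left]
      refine measure_mono_null ?_ hNnull
      rintro y ⟨x, hx, rfl⟩
      exact hx.2
    have hae := (setLIntegral_eq_zero_iff hAmeas hΦf).1 h0
    rw [ae_restrict_iff' hD]
    filter_upwards [hae] with x hx hxD
    by_cases hfx : f x ∈ N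
    · exact Or.inl (hx ⟨hxD, hfx⟩)
    · exact Or.inr hfx
  -- a.e. on D: Φf = 0 or φ(f x) = φ'(f x)
  have hkey1 : ∀ᵐ x ∂μ.restrict D, Φf x = 0 ∨ φ (f x) = φ' (f x) := by
    have hnull : μ {y | φ y ≠ φ' y} = 0 := hφeq
    have := hkey (toMeasurable μ {y | φ y ≠ φ' y}) (measurableSet_toMeasurable _ _)
      (by rwa [measure_toMeasurable])
    filter_upwards [this] with x hx
    rcases hx with h | h
    · exact Or.inl h
    · refine Or.inr ?_
      by_contra hne
      exact h (subset_toMeasurable _ _ hne)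
  -- a.e. on D: Φf = 0 or φ'(f x) ≥ 0
  have hkey2 : ∀ᵐ x ∂μ.restrict D, Φf x = 0 ∨ 0 ≤ φ' (f x) := by
    have hnull : μ {y | φ' y < 0} = 0 := by
      have h : ∀ᵐ y ∂μ, 0 ≤ φ' y := by
        filter_upwards [hφ0, hφeq] with y h1 h2
        rw [← h2]; exact h1
      rw [ae_iff] at h
      refine measure_mono_null ?_ h
      intro y hy
      exact not_le.2 hy
    have := hkey _ (measurableSet_lt hφ'meas.measurable measurable_const) hnull
    filter_upwards [this] with x hx
    rcases hx with h | h
    · exact Or.inl h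
    · exact Or.inr (not_lt.1 h)
  -- pointwise a.e. identification of the real integrand with the ℝ≥0∞ one
  have hcomb : ∀ᵐ x ∂μ.restrict D,
      (Φf x).toReal * φ (f x) = (Φf x * g (f x)).toReal := by
    filter_upwards [hkey1, hkey2] with x hx1 hx2
    rcases hx1 with h0 | heq
    · simp [h0]
    rcases hx2 with h0 | hpos
    · simp [h0]
    rw [heq, ENNReal.toReal_mul, hgdef, ENNReal.toReal_ofReal hpos]
  -- main lintegral computation
  have hlin : ∀ E : Set X, MeasurableSet E →
      ∫⁻ x in E ∩ D, Φf x * g (f x) ∂μ = ∫⁻ y in F ⁻¹' E ∩ R, g y ∂μ := by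
    intro E hE
    have hIgmeas : Measurable ((F ⁻¹' E).indicator g) := hg.indicator (hF hE)
    have step1 : ∫⁻ x in E ∩ D, Φf x * g (f x) ∂μ
        = ∫⁻ x, Φf x * (F ⁻¹' E).indicator g (f x) ∂μ.restrict D := by
      rw [← Measure.restrict_restrict hE, ← lintegral_indicator hE]
      apply lintegral_congr_ae
      filter_upwards [hinv] with x hxinv
      by_cases hxE : x ∈ E
      · have hfxE : f x ∈ F ⁻¹' E := by rw [mem_preimage, hxinv]; exact hxE
        simp [hxE, hfxE]
      · have hfxE : f x ∉ F ⁻¹' E := by rw [mem_preimage, hxinv]; exact hxE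
        simp [hxE, hfxE]
    have step2 : ∫⁻ x, Φf x * (F ⁻¹' E).indicator g (f x) ∂μ.restrict D
        = ∫⁻ x, (F ⁻¹' E).indicator g (f x) ∂ν := by
      exact (lintegral_withDensity_eq_lintegral_mul (μ.restrict D) hΦf
        (hIgmeas.comp hf)).symm
    have step3 : ∫⁻ x, (F ⁻¹' E).indicator g (f x) ∂ν
        = ∫⁻ y, (F ⁻¹' E).indicator g y ∂(Measure.map f ν) :=
      (lintegral_map hIgmeas hf).symm
    rw [step1, step2, step3, claimA, lintegral_indicator (hF hE),
      Measure.restrict_restrict (hF hE)]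
  -- real-integral version on the left-hand side
  have hreal : ∀ E : Set X, MeasurableSet E →
      ∫ x in E, D.indicator (fun x => (Φf x).toReal * φ (f x)) x ∂μ
        = (∫⁻ x in E ∩ D, Φf x * g (f x) ∂μ).toReal := by
    intro E hE
    rw [setIntegral_indicator hD]
    have hae : (fun x => (Φf x).toReal * φ (f x)) =ᵐ[μ.restrict (E ∩ D)]
        fun x => (Φf x * g (f x)).toReal :=
      ae_restrict_of_ae_restrict_of_subset inter_subset_right hcomb
    have hlt : ∀ᵐ x ∂μ.restrict (E ∩ D), Φf x * g (f x) < ∞ := by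
      filter_upwards [ae_restrict_of_ae_restrict_of_subset
        (inter_subset_right : E ∩ D ⊆ D) hfin] with x hx
      exact ENNReal.mul_lt_top hx.lt_top (hgfin _)
    rw [integral_congr_ae hae]
    exact integral_toReal ((hΦf.mul (hg.comp hf)).aemeasurable.restrict) hlt
  -- real-integral version on the right-hand side
  have hφR : φ =ᵐ[μ] R.indicator φ := by
    rw [Filter.EventuallyEq, ae_iff]
    refine measure_mono_null ?_ hsupp
    intro x hx
    simp only [mem_setOf_eq] at hx
    by_cases hxR : x ∈ R
    · exact absurd (indicator_of_mem hxR φ).symm hx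
    · rw [indicator_of_notMem hxR] at hx
      exact ⟨hx, hxR⟩
  have hφg : φ =ᵐ[μ] fun x => (g x).toReal := by
    filter_upwards [hφeq, hφ0] with x h1 h2
    rw [hgdef]
    simp only
    rw [ENNReal.toReal_ofReal (h1 ▸ h2), ← h1]
  have hrhs : ∀ E : Set X, MeasurableSet E →
      ∫ x in F ⁻¹' E, φ x ∂μ = (∫⁻ y in F ⁻¹' E ∩ R, g y ∂μ).toReal := by
    intro E hE
    rw [integral_congr_ae (ae_restrict_of_ae hφR), setIntegral_indicator hR,
      integral_congr_ae (ae_restrict_of_ae hφg)]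
    exact integral_toReal hg.aemeasurable.restrict (ae_of_all _ hgfin)
  -- part 1
  have part1 : ∀ E : Set X, MeasurableSet E →
      ∫ x in E, D.indicator (fun x => (Φf x).toReal * φ (f x)) x ∂μ
        = ∫ x in F ⁻¹' E, φ x ∂μ := by
    intro E hE
    rw [hreal E hE, hlin E hE, hrhs E hE]
  refine ⟨part1, ?_⟩
  -- integrability of the candidate density
  have hgint : ∫⁻ y, g y ∂μ < ∞ := by
    have hb : ∫⁻ y, g y ∂μ = ∫⁻ y, ENNReal.ofReal (φ y) ∂μ := by
      refine lintegral_congr_ae ?_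
      filter_upwards [hφeq] with y hy
      rw [hgdef]
      simp only
      rw [hy]
    rw [hb]
    calc ∫⁻ y, ENNReal.ofReal (φ y) ∂μ ≤ ∫⁻ y, (‖φ y‖₊ : ℝ≥0∞) ∂μ :=
          lintegral_mono fun y => Real.ofReal_le_enorm (φ y)
      _ < ∞ := hφ.2
  have hDlt : ∫⁻ x in D, Φf x * g (f x) ∂μ < ∞ := by
    have h := hlin univ MeasurableSet.univ
    rw [univ_inter, preimage_univ, univ_inter] at h
    rw [h]
    exact lt_of_le_of_lt (setLIntegral_le_lintegral R g) hgint
  have hG'int : Integrable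
      (fun x => D.indicator (fun x => (Φf x * g (f x)).toReal) x) μ := by
    refine ⟨(((hΦf.mul (hg.comp hf)).ennreal_toReal).indicator
      hD).aestronglyMeasurable, ?_⟩
    rw [hasFiniteIntegral_iff_norm]
    calc ∫⁻ x, ENNReal.ofReal ‖D.indicator (fun x => (Φf x * g (f x)).toReal) x‖ ∂μ
        ≤ ∫⁻ x, D.indicator (fun x => Φf x * g (f x)) x ∂μ := by
          refine lintegral_mono fun x => ?_
          by_cases hxD : x ∈ D
          · rw [indicator_of_mem hxD, indicator_of_mem hxD,
              Real.norm_eq_abs, abs_of_nonneg ENNReal.toReal_nonneg]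
            exact ENNReal.ofReal_toReal_le
          · rw [indicator_of_notMem hxD, indicator_of_notMem hxD]
            simp
      _ = ∫⁻ x in D, Φf x * g (f x) ∂μ := lintegral_indicator hD _
      _ < ∞ := hDlt
  have hGae : (fun x => D.indicator (fun x => (Φf x).toReal * φ (f x)) x) =ᵐ[μ]
      fun x => D.indicator (fun x => (Φf x * g (f x)).toReal) x := by
    filter_upwards [(ae_restrict_iff' hD).1 hcomb] with x hx
    by_cases hxD : x ∈ D
    · rw [indicator_of_mem hxD, indicator_of_mem hxD, hx hxD]
    · rw [indicator_of_notMem hxD, indicator_of_notMem hxD]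
  have hGint : Integrable
      (fun x => D.indicator (fun x => (Φf x).toReal * φ (f x)) x) μ :=
    hG'int.congr hGae.symm
  -- part 2
  intro P hP hPeq
  refine Integrable.ae_eq_of_forall_setIntegral_eq P _ hP hGint ?_
  intro s hs _
  rw [hPeq s hs, part1 s hs]
end

section
/- Let (X,μ) be a σ-finite measure space with an A_∞-branching system ({f_i}, {D_i}, {R_i}, F), and let π(S_i*) denote the operator ψ ↦ χ_{D_i}·Φ_{f_i}^{1/2}·(ψ∘f_i) on L²(X,μ). If φ ∈ L¹(X,μ) with φ ≥ 0 μ-a.e. and the support of φ is contained in R_1 ∪ ⋯ ∪ R_N up to μ-null sets, then the Perron–Frobenius operator satisfies P_F(φ) = Σ_{i=1}^N (π(S_i*)√φ)² μ-a.e. -/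
open MeasureTheory Set ENNReal

/-- An A_∞-branching system on a measure space (X, μ), for an infinite 0-1 matrix A
(definition 2.1 of the paper). -/
structure BranchingSystem {X : Type*} [MeasurableSpace X] (μ : MeasureTheory.Measure X)
    (A : ℕ → ℕ → ℕ) where
  f : ℕ → X → X
  F : X → X
  D : ℕ → Set X
  R : ℕ → Set X
  Φ : ℕ → X → ℝ≥0∞
  Φinv : ℕ → X → ℝ≥0∞
  measD : ∀ i, MeasurableSet (D i)
  measR : ∀ i, MeasurableSet (R i)
  measf : ∀ i, Measurable (f i)
  measF : Measurable F
  -- (1) f_i : D_i → R_i with f_i(D_i) = R_i μ-a.e.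
  mapsTo : ∀ i, Set.MapsTo (f i) (D i) (R i)
  image_ae : ∀ i, μ (f i '' D i \ R i) = 0 ∧ μ (R i \ f i '' D i) = 0
  -- (2) F ∘ f_i = id_{D_i} μ-a.e., F nonsingular
  left_inv : ∀ i, ∀ᵐ x ∂μ.restrict (D i), F (f i x) = x
  nonsingular : ∀ N : Set X, μ N = 0 → μ (F ⁻¹' N) = 0
  -- (3) μ(R_i ∩ R_j) = 0 for i ≠ j
  disjoint : ∀ i j, i ≠ j → μ (R i ∩ R j) = 0
  -- (4)
  cond4 : ∀ i j, (A i j = 0 → μ (R j ∩ D i) = 0) ∧ (A i j = 1 → μ (R j \ D i) = 0)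
  -- (5)
  cond5 : ∀ U V : Finset ℕ,
    ({j | (∀ u ∈ U, A u j = 1) ∧ ∀ v ∈ V, A v j = 0} : Set ℕ).Finite →
    μ (((⋂ u ∈ U, D u) ∩ ⋂ v ∈ V, (D v)ᶜ) \
        ⋃ j ∈ {j | (∀ u ∈ U, A u j = 1) ∧ ∀ v ∈ V, A v j = 0}, R j) = 0 ∧
    μ ((⋃ j ∈ {j | (∀ u ∈ U, A u j = 1) ∧ ∀ v ∈ V, A v j = 0}, R j) \
        ((⋂ u ∈ U, D u) ∩ ⋂ v ∈ V, (D v)ᶜ)) = 0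
  -- (6) Radon–Nikodym derivatives of μ∘f_i on D_i and μ∘f_i⁻¹ on R_i, extended by 0
  measΦ : ∀ i, Measurable (Φ i)
  measΦinv : ∀ i, Measurable (Φinv i)
  Φ_zero : ∀ i, ∀ x ∉ D i, Φ i x = 0
  Φinv_zero : ∀ i, ∀ x ∉ R i, Φinv i x = 0
  rn : ∀ i, ∀ E : Set X, MeasurableSet E → E ⊆ D i → μ (f i '' E) = ∫⁻ x in E, Φ i x ∂μ
  rninv : ∀ i, ∀ E : Set X, MeasurableSet E → E ⊆ R i →
    μ (f i ⁻¹' E ∩ D i) = ∫⁻ x in E, Φinv i x ∂μ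

namespace BranchingSystem

variable {X : Type*} [MeasurableSpace X] {μ : Measure X} {A : ℕ → ℕ → ℕ} (B : BranchingSystem μ A)

lemma map_eq (i : ℕ) :
    Measure.map (B.f i) ((μ.restrict (B.D i)).withDensity (B.Φ i)) = μ.restrict (B.R i) := by
  ext S hS
  rw [Measure.map_apply (B.measf i) hS, withDensity_apply _ (hS.preimage (B.measf i)),
    Measure.restrict_restrict (hS.preimage (B.measf i)), Measure.restrict_apply hS,
    ← B.rn i _ ((hS.preimage (B.measf i)).inter (B.measD i)) inter_subset_right,
    Set.image_preimage_inter]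
  refine measure_congr ?_
  have h := B.image_ae i
  have himg : (B.f i '' B.D i : Set X) =ᵐ[μ] (B.R i : Set X) :=
    (MeasureTheory.ae_eq_set).2 ⟨h.1, h.2⟩
  exact (Filter.EventuallyEq.refl _ _).inter himg

lemma lintegral_R (i : ℕ) {G : X → ℝ≥0∞} (hG : Measurable G) :
    ∫⁻ x in B.R i, G x ∂μ = ∫⁻ x in B.D i, B.Φ i x * G (B.f i x) ∂μ := by
  rw [← B.map_eq i, lintegral_map hG (B.measf i)]
  exact lintegral_withDensity_eq_lintegral_mul _ (B.measΦ i) (hG.comp (B.measf i))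

lemma preimage_null (i : ℕ) {Z : Set X} (hZ : μ Z = 0) :
    μ (B.f i ⁻¹' Z ∩ B.D i) = 0 := by
  have h2 := B.rninv i (toMeasurable μ Z ∩ B.R i)
    ((measurableSet_toMeasurable μ Z).inter (B.measR i)) inter_subset_right
  have h1 : μ (toMeasurable μ Z ∩ B.R i) = 0 :=
    measure_mono_null inter_subset_left (by simpa using hZ)
  rw [setLIntegral_measure_zero _ _ h1] at h2
  refine measure_mono_null (fun x hx => ?_) h2
  exact ⟨⟨subset_toMeasurable μ Z hx.1, B.mapsTo i hx.2⟩, hx.2⟩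

end BranchingSystem

/-- if φ ∈ L¹, φ ≥ 0, is supported (up to null sets) in R_1 ∪ ⋯ ∪ R_N,
then P_F(φ) = Σ_{i<N} (π(S_i*)√φ)² μ-a.e., where π(S_i*)ψ = χ_{D_i}·Φ_{f_i}^{1/2}·(ψ∘f_i). -/
theorem stmt11 {X : Type*} [MeasurableSpace X] (μ : Measure X) [SigmaFinite μ]
    (A : ℕ → ℕ → ℕ) (B : BranchingSystem μ A)
    (φ : X → ℝ) (hφ : Integrable φ μ) (hφ0 : 0 ≤ᵐ[μ] φ)
    (N : ℕ) (hsupp : μ (Function.support φ \ ⋃ i ∈ Finset.range N, B.R i) = 0)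
    -- P is the Perron–Frobenius image P_F(φ)
    (P : X → ℝ) (hP : Integrable P μ)
    (hPF : ∀ E : Set X, MeasurableSet E →
      ∫ x in E, P x ∂μ = ∫ x in B.F ⁻¹' E, φ x ∂μ) :
    P =ᵐ[μ] fun x => ∑ i ∈ Finset.range N,
      ((B.D i).indicator
        (fun x => Real.sqrt ((B.Φ i x).toReal) * Real.sqrt (φ (B.f i x))) x) ^ 2 := by
  classical
  -- a measurable, everywhere-nonnegative representative φ' of φ
  obtain ⟨φ₀, hφ₀m, hφ₀e⟩ : ∃ φ₀ : X → ℝ, Measurable φ₀ ∧ φ =ᵐ[μ] φ₀ :=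
    ⟨hφ.1.mk φ, (hφ.1.stronglyMeasurable_mk).measurable, hφ.1.ae_eq_mk⟩
  set φ' : X → ℝ := fun x => max (φ₀ x) 0 with hφ'def
  have hφ'm : Measurable φ' := hφ₀m.max measurable_const
  have hφ'0 : ∀ x, 0 ≤ φ' x := fun x => le_max_right _ _
  have hφ'e : φ =ᵐ[μ] φ' := by
    filter_upwards [hφ₀e, hφ0] with x h1 h2
    have h2' : (0:ℝ) ≤ φ x := h2
    simp [hφ'def, ← h1, max_eq_left h2']
  have hφ'int : Integrable φ' μ := hφ.congr hφ'e
  set g : X → ℝ≥0∞ := fun x => ENNReal.ofReal (φ' x) with hgdef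
  have hgm : Measurable g := ENNReal.measurable_ofReal.comp hφ'm
  have hgtop : ∫⁻ x, g x ∂μ ≠ ∞ := by
    have := hφ'int.hasFiniteIntegral
    rw [hasFiniteIntegral_iff_norm] at this
    refine ne_of_lt (lt_of_le_of_lt (lintegral_mono fun x => ?_) this)
    exact ENNReal.ofReal_le_ofReal (le_abs_self _)
  -- the ℝ≥0∞-valued summands
  set G : ℕ → X → ℝ≥0∞ :=
    fun i => (B.D i).indicator (fun x => B.Φ i x * g (B.f i x)) with hGdef
  have hGm : ∀ i, Measurable (G i) :=
    fun i => ((B.measΦ i).mul (hgm.comp (B.measf i))).indicator (B.measD i)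
  have hGfin : ∀ i, ∫⁻ x, G i x ∂μ ≠ ∞ := by
    intro i
    rw [hGdef]
    simp only []
    rw [lintegral_indicator (B.measD i), ← B.lintegral_R i hgm]
    exact ne_of_lt (lt_of_le_of_lt (lintegral_mono_set (subset_univ _))
      (by rw [Measure.restrict_univ]; exact lt_of_le_of_ne le_top hgtop))
  have hGint : ∀ i, Integrable (fun x => (G i x).toReal) μ :=
    fun i => integrable_toReal_of_lintegral_ne_top (hGm i).aemeasurable (hGfin i)
  have hGlt : ∀ i, ∀ᵐ x ∂μ, G i x < ∞ := fun i => ae_lt_top (hGm i) (hGfin i)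
  -- φ = φ' a.e. after composing with f i on D i
  have hZnull : μ {x | φ x ≠ φ' x} = 0 := hφ'e
  have hpull : ∀ i, μ (B.f i ⁻¹' {x | φ x ≠ φ' x} ∩ B.D i) = 0 :=
    fun i => B.preimage_null i hZnull
  -- Step 1: the target function equals (∑ i, (G i).toReal) a.e.
  have htarget : (fun x => ∑ i ∈ Finset.range N,
      ((B.D i).indicator
        (fun x => Real.sqrt ((B.Φ i x).toReal) * Real.sqrt (φ (B.f i x))) x) ^ 2)
      =ᵐ[μ] fun x => ∑ i ∈ Finset.range N, (G i x).toReal := by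
    have hbig : μ (⋃ i ∈ Finset.range N, (B.f i ⁻¹' {x | φ x ≠ φ' x} ∩ B.D i)) = 0 :=
      measure_biUnion_null_iff (Finset.range N).countable_toSet |>.2 fun i _ => hpull i
    filter_upwards [measure_eq_zero_iff_ae_notMem.1 hbig] with x hx
    refine Finset.sum_congr rfl fun i hi => ?_
    by_cases hD : x ∈ B.D i
    · have hxne : φ (B.f i x) = φ' (B.f i x) := by
        by_contra hne
        exact hx (mem_biUnion hi ⟨hne, hD⟩)
      rw [Set.indicator_of_mem hD, hGdef]
      simp only [Set.indicator_of_mem hD]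
      rw [mul_pow, sq, sq, Real.mul_self_sqrt ENNReal.toReal_nonneg,
        Real.mul_self_sqrt (by rw [hxne]; exact hφ'0 _),
        ENNReal.toReal_mul, hxne, hgdef]
      simp [ENNReal.toReal_ofReal (hφ'0 _)]
    · rw [Set.indicator_of_notMem hD, hGdef]
      simp [Set.indicator_of_notMem hD]
  -- Step 2: P =ᵐ ∑ i, (G i).toReal, by comparing set integrals
  have hmain : P =ᵐ[μ] fun x => ∑ i ∈ Finset.range N, (G i x).toReal := by
    refine ae_eq_of_forall_setIntegral_eq_of_sigmaFinite
      (fun s hs _ => hP.integrableOn)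
      (fun s hs _ => (integrable_finset_sum _ fun i _ => hGint i).integrableOn)
      (fun E hE _ => ?_)
    set T : Set X := B.F ⁻¹' E with hTdef
    have hTm : MeasurableSet T := hE.preimage B.measF
    -- the density measure ν on T
    set ν : Measure X := (μ.restrict T).withDensity g with hνdef
    have hν : ∀ S : Set X, MeasurableSet S → ν S = ∫⁻ x in T ∩ S, g x ∂μ := by
      intro S hS
      rw [hνdef, withDensity_apply _ hS, Measure.restrict_restrict hS, Set.inter_comm]
    have hνfin : ∀ S : Set X, ν S ≠ ∞ := by
      intro S
      refine ne_of_lt (lt_of_le_of_lt (measure_mono (subset_univ S)) ?_)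
      rw [hν univ MeasurableSet.univ]
      exact lt_of_le_of_lt (lintegral_mono_set (subset_univ _))
        (by rw [Measure.restrict_univ]; exact lt_of_le_of_ne le_top hgtop)
    -- key identity: ∫⁻_E G i = ν (R i)
    have hkey : ∀ i, ∫⁻ x in E, G i x ∂μ = ν (B.R i) := by
      intro i
      have hae : ∀ᵐ x ∂μ, x ∈ B.D i → B.F (B.f i x) = x :=
        (ae_restrict_iff' (B.measD i)).1 (B.left_inv i)
      have h1 : ∫⁻ x in E, G i x ∂μ = ∫⁻ x in B.D i ∩ E, B.Φ i x * g (B.f i x) ∂μ := by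
        rw [hGdef]
        simp only []
        rw [lintegral_indicator (B.measD i), Measure.restrict_restrict (B.measD i)]
      have h2 : ν (B.R i) = ∫⁻ x in B.R i, T.indicator g x ∂μ := by
        rw [hν _ (B.measR i), lintegral_indicator hTm, Measure.restrict_restrict hTm]
      have h3 := B.lintegral_R i (hgm.indicator hTm)
      have h4 : ∫⁻ x in B.D i, B.Φ i x * T.indicator g (B.f i x) ∂μ
          = ∫⁻ x in B.D i, E.indicator (fun x => B.Φ i x * g (B.f i x)) x ∂μ := by
        refine setLIntegral_congr_fun_ae (B.measD i) ?_
        filter_upwards [hae] with x hFx hxD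
        by_cases hxE : x ∈ E
        · have hT : B.f i x ∈ T := by rw [hTdef, mem_preimage, hFx hxD]; exact hxE
          rw [Set.indicator_of_mem hT, Set.indicator_of_mem hxE]
        · have hT : B.f i x ∉ T := by rw [hTdef, mem_preimage, hFx hxD]; exact hxE
          rw [Set.indicator_of_notMem hT, Set.indicator_of_notMem hxE, mul_zero]
      have h5 : ∫⁻ x in B.D i, E.indicator (fun x => B.Φ i x * g (B.f i x)) x ∂μ
          = ∫⁻ x in E ∩ B.D i, B.Φ i x * g (B.f i x) ∂μ := by
        rw [lintegral_indicator hE, Measure.restrict_restrict hE]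
      rw [h1, h2, h3, h4, h5, Set.inter_comm]
    -- sum of set integrals of the summands
    have hsum : ∫ x in E, (∑ i ∈ Finset.range N, (G i x).toReal) ∂μ
        = ∑ i ∈ Finset.range N, (ν (B.R i)).toReal := by
      rw [integral_finset_sum _ (fun i _ => (hGint i).integrableOn)]
      refine Finset.sum_congr rfl fun i _ => ?_
      rw [integral_toReal ((hGm i).aemeasurable.restrict) (ae_restrict_of_ae (hGlt i)), hkey i]
    set U : Set X := ⋃ i ∈ Finset.range N, B.R i with hUdef
    have hUm : MeasurableSet U :=
      MeasurableSet.biUnion (Finset.range N).countable_toSet fun i _ => B.measR i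
    have hdisj : ν U = ∑ i ∈ Finset.range N, ν (B.R i) := by
      refine measure_biUnion_finset₀ ?_ (fun i _ => (B.measR i).nullMeasurableSet)
      intro i _ j _ hij
      show ν (B.R i ∩ B.R j) = 0
      rw [hν _ ((B.measR i).inter (B.measR j))]
      exact setLIntegral_measure_zero _ _
        (measure_mono_null inter_subset_right (B.disjoint i j hij))
    -- g vanishes a.e. off U
    have hsupp' : μ (Function.support φ' \ U) = 0 := by
      refine measure_mono_null (fun x hx => ?_) (measure_union_null hsupp hZnull)
      by_cases h : φ x = φ' x
      · exact Or.inl ⟨by rw [Function.mem_support, h]; exact hx.1, hx.2⟩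
      · exact Or.inr h
    have hν0 : ν (univ \ U) = 0 := by
      rw [hν _ (MeasurableSet.univ.diff hUm)]
      have : ∫⁻ x in T ∩ (univ \ U), g x ∂μ = ∫⁻ x in T ∩ (univ \ U), 0 ∂μ := by
        refine setLIntegral_congr_fun_ae (hTm.inter (MeasurableSet.univ.diff hUm)) ?_
        filter_upwards [measure_eq_zero_iff_ae_notMem.1 hsupp'] with x hx hxS
        by_contra hgx
        refine hx ⟨?_, hxS.2.2⟩
        rw [Function.mem_support]
        intro h0
        exact hgx (by rw [hgdef]; simp [h0])
      rw [this, lintegral_zero]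
    have hνU : ν univ = ν U := by
      refine le_antisymm ?_ (measure_mono (subset_univ _))
      calc ν univ = ν (U ∪ univ \ U) := by rw [Set.union_diff_cancel (subset_univ _)]
        _ ≤ ν U + ν (univ \ U) := measure_union_le _ _
        _ = ν U := by rw [hν0, add_zero]
    -- put everything together
    have hint1 : ∫ x in E, P x ∂μ = ∫ x in T, φ' x ∂μ := by
      rw [hPF E hE]
      exact integral_congr_ae (ae_restrict_of_ae hφ'e)
    have hint2 : ∫ x in T, φ' x ∂μ = (ν univ).toReal := by
      rw [integral_eq_lintegral_of_nonneg_ae (Filter.Eventually.of_forall fun x => hφ'0 x)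
        hφ'm.aestronglyMeasurable.restrict]
      congr 1
      rw [hν univ MeasurableSet.univ, Set.inter_univ]
    rw [hint1, hint2, hνU, hdisj, hsum,
      ENNReal.toReal_sum (fun i _ => hνfin (B.R i))]
  exact hmain.trans htarget.symm
end

section
/- With the same A_∞-branching system hypotheses, if φ ∈ L¹(X,μ), φ ≥ 0 μ-a.e., and the support of φ is contained in ⋃_{i=1}^∞ R_i up to μ-null sets, then P_F(φ) = lim_{N→∞} Σ_{i=1}^N (π(S_i*)√φ)², where the limit is in the L¹(X,μ) norm. -/
open MeasureTheory Set ENNReal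

/-- if φ ∈ L¹, φ ≥ 0, is supported (up to null sets) in ⋃_{i} R_i, then
P_F(φ) = lim_{N→∞} Σ_{i<N} (π(S_i*)√φ)² in the L¹ norm. -/
theorem stmt12 {X : Type*} [MeasurableSpace X] (μ : Measure X) [SigmaFinite μ]
    (A : ℕ → ℕ → ℕ) (B : BranchingSystem μ A)
    (φ : X → ℝ) (hφ : Integrable φ μ) (hφ0 : 0 ≤ᵐ[μ] φ)
    (hsupp : μ (Function.support φ \ ⋃ i, B.R i) = 0)
    -- P is the Perron–Frobenius image P_F(φ)
    (P : X → ℝ) (hP : Integrable P μ)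
    (hPF : ∀ E : Set X, MeasurableSet E →
      ∫ x in E, P x ∂μ = ∫ x in B.F ⁻¹' E, φ x ∂μ) :
    Filter.Tendsto
      (fun N => ∫ x, |P x - ∑ i ∈ Finset.range N,
        ((B.D i).indicator
          (fun x => Real.sqrt ((B.Φ i x).toReal) * Real.sqrt (φ (B.f i x))) x) ^ 2| ∂μ)
      Filter.atTop (nhds 0) := by
  classical
  obtain ⟨φ', hφ'sm, hφφ'⟩ := hφ.1
  have hφ'm : Measurable φ' := hφ'sm.measurable
  set ψ : X → ℝ≥0∞ := fun x => ENNReal.ofReal (φ' x) with hψdef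
  have hψm : Measurable ψ := ENNReal.measurable_ofReal.comp hφ'm
  have hφ'0 : 0 ≤ᵐ[μ] φ' := by
    filter_upwards [hφ0, hφφ'] with x h1 h2; rw [← h2]; exact h1
  have hφ'int : Integrable φ' μ := hφ.congr hφφ'
  have hψtop : ∫⁻ x, ψ x ∂μ ≠ ∞ := by
    have := (hasFiniteIntegral_iff_ofReal hφ'0).1 hφ'int.2
    exact this.ne
  set gE : ℕ → X → ℝ≥0∞ :=
    fun i => (B.D i).indicator (fun x => B.Φ i x * ψ (B.f i x)) with hgEdef
  have hgEm : ∀ i, Measurable (gE i) := fun i =>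
    ((B.measΦ i).mul (hψm.comp (B.measf i))).indicator (B.measD i)
  -- Key change-of-variables identity
  have key : ∀ i (E : Set X), MeasurableSet E →
      ∫⁻ x in E, gE i x ∂μ = ∫⁻ x in B.F ⁻¹' E ∩ B.R i, ψ x ∂μ := by
    intro i E hE
    have hD := B.measD i
    have hfm := B.measf i
    -- null set of non-invertibility
    have hZ : μ ({x | ¬ B.F (B.f i x) = x} ∩ B.D i) = 0 := by
      have h := B.left_inv i
      rw [ae_iff] at h
      rwa [Measure.restrict_apply' hD] at h
    set M : Set X := toMeasurable μ ({x | ¬ B.F (B.f i x) = x} ∩ B.D i) ∩ B.D i with hMdef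
    have hM : MeasurableSet M := (measurableSet_toMeasurable _ _).inter hD
    have hMnull : μ M = 0 := by
      refine le_antisymm ?_ zero_le
      calc μ M ≤ μ (toMeasurable μ ({x | ¬ B.F (B.f i x) = x} ∩ B.D i)) :=
            measure_mono inter_subset_left
        _ = 0 := by rw [measure_toMeasurable, hZ]
    have hfM : μ (B.f i '' M) = 0 := by
      rw [B.rn i M hM inter_subset_right]
      exact setLIntegral_measure_zero _ _ hMnull
    have hsubM : {x | ¬ B.F (B.f i x) = x} ∩ B.D i ⊆ M :=
      subset_inter (subset_toMeasurable _ _) inter_subset_right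
    -- step A
    have hA : ∫⁻ x in E, gE i x ∂μ = ∫⁻ x in E ∩ B.D i, B.Φ i x * ψ (B.f i x) ∂μ := by
      rw [hgEdef]
      rw [lintegral_indicator hD, Measure.restrict_restrict hD, Set.inter_comm]
    set ρ := μ.withDensity ((E ∩ B.D i).indicator (B.Φ i)) with hρdef
    have hindm : Measurable ((E ∩ B.D i).indicator (B.Φ i)) :=
      (B.measΦ i).indicator (hE.inter hD)
    have hcomp : Measurable fun x => ψ (B.f i x) := hψm.comp hfm
    have hB : ∫⁻ x in E ∩ B.D i, B.Φ i x * ψ (B.f i x) ∂μ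
        = ∫⁻ x, ψ (B.f i x) ∂ρ := by
      rw [hρdef, lintegral_withDensity_eq_lintegral_mul μ hindm hcomp]
      rw [← lintegral_indicator (hE.inter hD)]
      congr 1
      funext x
      by_cases hx : x ∈ E ∩ B.D i
      · simp [Set.indicator_of_mem hx]
      · simp [Set.indicator_of_notMem hx]
    have hmap : ρ.map (B.f i) = μ.restrict (B.f i '' (E ∩ B.D i)) := by
      ext S hS
      rw [Measure.map_apply hfm hS, Measure.restrict_apply hS]
      rw [hρdef, withDensity_apply _ (hfm hS)]
      have : ∫⁻ x in B.f i ⁻¹' S, (E ∩ B.D i).indicator (B.Φ i) x ∂μ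
          = ∫⁻ x in (E ∩ B.D i) ∩ B.f i ⁻¹' S, B.Φ i x ∂μ := by
        rw [lintegral_indicator (hE.inter hD), Measure.restrict_restrict (hE.inter hD)]
      rw [this]
      rw [← B.rn i _ ((hE.inter hD).inter (hfm hS))
        (inter_subset_left.trans inter_subset_right)]
      congr 1
      rw [Set.inter_comm (E ∩ B.D i), Set.image_preimage_inter]
    have hsetae : (B.f i '' (E ∩ B.D i) : Set X) =ᵐ[μ] (B.F ⁻¹' E ∩ B.R i : Set X) := by
      rw [ae_eq_set]
      constructor
      · refine measure_mono_null ?_ hfM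
        rintro y ⟨⟨x, ⟨hxE, hxD⟩, rfl⟩, hy⟩
        have hR : B.f i x ∈ B.R i := B.mapsTo i hxD
        have hne : ¬ B.F (B.f i x) = x := by
          intro h
          exact hy ⟨by simpa [Set.mem_preimage, h] using hxE, hR⟩
        exact ⟨x, hsubM ⟨hne, hxD⟩, rfl⟩
      · have hnull : μ ((B.R i \ B.f i '' B.D i) ∪ B.f i '' M) = 0 :=
          measure_union_null (B.image_ae i).2 hfM
        refine measure_mono_null ?_ hnull
        rintro y ⟨⟨hyE, hyR⟩, hy⟩
        by_cases hyD : y ∈ B.f i '' B.D i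
        · obtain ⟨x, hxD, rfl⟩ := hyD
          right
          by_cases hFx : B.F (B.f i x) = x
          · exact absurd ⟨x, ⟨by rwa [← hFx], hxD⟩, rfl⟩ hy
          · exact ⟨x, hsubM ⟨hFx, hxD⟩, rfl⟩
        · exact Or.inl ⟨hyR, hyD⟩
    calc ∫⁻ x in E, gE i x ∂μ = ∫⁻ x, ψ (B.f i x) ∂ρ := by rw [hA, hB]
      _ = ∫⁻ y, ψ y ∂(ρ.map (B.f i)) := (lintegral_map hψm hfm).symm
      _ = ∫⁻ y in B.f i '' (E ∩ B.D i), ψ y ∂μ := by rw [hmap]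
      _ = ∫⁻ y in B.F ⁻¹' E ∩ B.R i, ψ y ∂μ := by
          rw [Measure.restrict_congr_set hsetae]
  set L : ℕ → ℝ≥0∞ := fun i => ∫⁻ x in B.R i, ψ x ∂μ with hLdef
  have hgEtot : ∀ i, ∫⁻ x, gE i x ∂μ = L i := by
    intro i
    have h := key i univ MeasurableSet.univ
    simpa [hLdef, Measure.restrict_univ] using h
  have hLle : ∀ i, L i ≤ ∫⁻ x, ψ x ∂μ := fun i => setLIntegral_le_lintegral _ _
  have hLfin : ∀ i, L i ≠ ∞ := fun i => ((hLle i).trans_lt hψtop.lt_top).ne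
  have hfin : ∀ᵐ x ∂μ, ∀ i, gE i x ≠ ∞ := by
    rw [ae_all_iff]
    intro i
    have h := ae_lt_top (hgEm i) (by rw [hgEtot i]; exact hLfin i)
    filter_upwards [h] with x hx using hx.ne
  set N₀ : Set X := toMeasurable μ {x | ¬ (φ x = φ' x ∧ 0 ≤ φ' x)} with hN₀def
  have hN₀meas : MeasurableSet N₀ := measurableSet_toMeasurable _ _
  have hN₀null : μ N₀ = 0 := by
    rw [hN₀def, measure_toMeasurable]
    have h : ∀ᵐ x ∂μ, φ x = φ' x ∧ 0 ≤ φ' x := by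
      filter_upwards [hφφ', hφ'0] with x h1 h2 using ⟨h1, h2⟩
    exact ae_iff.1 h
  have hpull : ∀ i, μ (B.D i ∩ B.f i ⁻¹' N₀) = 0 := by
    intro i
    have hsub : B.D i ∩ B.f i ⁻¹' N₀ ⊆ B.f i ⁻¹' (N₀ ∩ B.R i) ∩ B.D i := by
      rintro x ⟨hxD, hxN⟩
      exact ⟨⟨hxN, B.mapsTo i hxD⟩, hxD⟩
    refine measure_mono_null hsub ?_
    rw [B.rninv i _ (hN₀meas.inter (B.measR i)) inter_subset_right]
    exact setLIntegral_measure_zero _ _ (measure_mono_null inter_subset_left hN₀null)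
  have hgood : ∀ᵐ x ∂μ, ∀ i, x ∈ B.D i → B.f i x ∉ N₀ := by
    rw [ae_all_iff]
    intro i
    rw [ae_iff]
    refine measure_mono_null ?_ (hpull i)
    intro x hx
    simp only [Set.mem_setOf_eq] at hx
    push_neg at hx
    exact ⟨hx.1, hx.2⟩
  have heq : ∀ᵐ x ∂μ, ∀ N : ℕ,
      (∑ i ∈ Finset.range N, ((B.D i).indicator
        (fun x => Real.sqrt ((B.Φ i x).toReal) * Real.sqrt (φ (B.f i x))) x) ^ 2)
      = (∑ i ∈ Finset.range N, gE i x).toReal := by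
    filter_upwards [hfin, hgood] with x hx1 hx2
    intro N
    rw [ENNReal.toReal_sum (fun i _ => hx1 i)]
    refine Finset.sum_congr rfl fun i _ => ?_
    by_cases hxD : x ∈ B.D i
    · have hfx := hx2 i hxD
      have hval : φ (B.f i x) = φ' (B.f i x) ∧ 0 ≤ φ' (B.f i x) := by
        by_contra h
        exact hfx (subset_toMeasurable _ _ h)
      have hgx : gE i x = B.Φ i x * ψ (B.f i x) := Set.indicator_of_mem hxD _
      rw [Set.indicator_of_mem hxD, hgx]
      rcases eq_or_ne (B.Φ i x) ∞ with hΦ | hΦ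
      · have h1 : ψ (B.f i x) = 0 := by
          by_contra h0
          apply hx1 i
          rw [hgx, hΦ, ENNReal.top_mul h0]
        rw [hval.1, h1, hΦ]
        have hb : φ' (B.f i x) = 0 := by
          have h2 := ENNReal.ofReal_eq_zero.1 h1
          linarith [hval.2]
        rw [hb]
        simp
      · have hψx : (ψ (B.f i x)).toReal = φ' (B.f i x) := ENNReal.toReal_ofReal hval.2
        rw [hval.1, ENNReal.toReal_mul, hψx, mul_pow,
          Real.sq_sqrt ENNReal.toReal_nonneg, Real.sq_sqrt hval.2]
    · have hg0 : gE i x = 0 := Set.indicator_of_notMem hxD _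
      rw [Set.indicator_of_notMem hxD, hg0]
      simp
  have hSNm : ∀ N, Measurable fun x => ∑ i ∈ Finset.range N, gE i x :=
    fun N => Finset.measurable_sum _ fun i _ => hgEm i
  have hSNtot : ∀ N, ∫⁻ x, (∑ i ∈ Finset.range N, gE i x) ∂μ
      = ∑ i ∈ Finset.range N, L i := by
    intro N
    rw [lintegral_finset_sum _ fun i _ => hgEm i]
    exact Finset.sum_congr rfl fun i _ => hgEtot i
  have hSNne : ∀ N, ∫⁻ x, (∑ i ∈ Finset.range N, gE i x) ∂μ ≠ ∞ := by
    intro N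
    rw [hSNtot N]
    exact (ENNReal.sum_lt_top.2 fun i _ => (hLfin i).lt_top).ne
  have htNint : ∀ N, Integrable (fun x => (∑ i ∈ Finset.range N, gE i x).toReal) μ :=
    fun N => integrable_toReal_of_lintegral_ne_top (hSNm N).aemeasurable (hSNne N)
  have hSNfin : ∀ N, ∀ᵐ x ∂μ, (∑ i ∈ Finset.range N, gE i x) < ∞ := by
    intro N
    filter_upwards [hfin] with x hx
    exact ENNReal.sum_lt_top.2 fun i _ => (hx i).lt_top
  have hdisj : ∀ᵐ x ∂μ, ∀ i j, i ≠ j → ¬ (x ∈ B.R i ∧ x ∈ B.R j) := by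
    rw [ae_all_iff]; intro i; rw [ae_all_iff]; intro j
    rcases eq_or_ne i j with rfl | hij
    · exact Filter.Eventually.of_forall fun x h => absurd rfl h
    · rw [ae_iff]
      refine measure_mono_null ?_ (B.disjoint i j hij)
      intro x hx
      simp only [Set.mem_setOf_eq] at hx
      push_neg at hx
      exact hx.2
  have hL3 : ∀ (N : ℕ) (s : Set X), MeasurableSet s →
      ∑ i ∈ Finset.range N, ∫⁻ x in s ∩ B.R i, ψ x ∂μ ≤ ∫⁻ x in s, ψ x ∂μ := by
    intro N s hs
    have h1 : ∀ i, ∫⁻ x in s ∩ B.R i, ψ x ∂μ = ∫⁻ x in s, (B.R i).indicator ψ x ∂μ := by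
      intro i
      rw [lintegral_indicator (B.measR i), Measure.restrict_restrict (B.measR i),
        Set.inter_comm]
    simp_rw [h1]
    rw [← lintegral_finset_sum _ fun i _ => hψm.indicator (B.measR i)]
    refine lintegral_mono_ae (ae_restrict_of_ae ?_)
    filter_upwards [hdisj] with x hx
    by_cases hex : ∃ k ∈ Finset.range N, x ∈ B.R k
    · obtain ⟨k, hk, hxk⟩ := hex
      have hsum : ∑ i ∈ Finset.range N, (B.R i).indicator ψ x = ψ x := by
        rw [Finset.sum_eq_single_of_mem k hk]
        · exact Set.indicator_of_mem hxk _
        · intro j hj hjk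
          exact Set.indicator_of_notMem (fun hxj => hx j k hjk ⟨hxj, hxk⟩) _
      exact hsum.le
    · push_neg at hex
      have hsum : ∑ i ∈ Finset.range N, (B.R i).indicator ψ x = 0 :=
        Finset.sum_eq_zero fun j hj => Set.indicator_of_notMem (hex j hj) _
      exact hsum.trans_le zero_le
  have hψsupp : ∫⁻ x, ψ x ∂μ = ∫⁻ x in ⋃ i, B.R i, ψ x ∂μ := by
    rw [← lintegral_indicator (MeasurableSet.iUnion fun i => B.measR i)]
    refine lintegral_congr_ae ?_
    have hsae : ∀ᵐ x ∂μ, x ∉ Function.support φ \ ⋃ i, B.R i :=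
      measure_eq_zero_iff_ae_notMem.1 hsupp
    filter_upwards [hφφ', hsae] with x h1 h2
    by_cases hx : x ∈ ⋃ i, B.R i
    · rw [Set.indicator_of_mem hx]
    · rw [Set.indicator_of_notMem hx]
      have hφx : φ x = 0 := by
        by_contra h0
        exact h2 ⟨h0, hx⟩
      have hφ'x : φ' x = 0 := by rw [← h1, hφx]
      simp [hψdef, hφ'x]
  have hLlim : Filter.Tendsto (fun N => ∑ i ∈ Finset.range N, L i) Filter.atTop
      (nhds (∫⁻ x, ψ x ∂μ)) := by
    have hmono : Monotone fun N => ∑ i ∈ Finset.range N, L i := fun a b hab =>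
      Finset.sum_le_sum_of_subset (Finset.range_subset_range.2 hab)
    have hsup : (⨆ N, ∑ i ∈ Finset.range N, L i) = ∫⁻ x, ψ x ∂μ := by
      refine le_antisymm (iSup_le fun N => ?_) ?_
      · have h := hL3 N univ MeasurableSet.univ
        simpa [hLdef, Measure.restrict_univ, Set.univ_inter] using h
      · rw [hψsupp]
        refine le_trans (lintegral_iUnion_le _ _) ?_
        rw [ENNReal.tsum_eq_iSup_nat]
    rw [← hsup]
    exact tendsto_atTop_iSup hmono
  have hPset : ∀ E : Set X, MeasurableSet E →
      ∫ x in E, P x ∂μ = (∫⁻ x in B.F ⁻¹' E, ψ x ∂μ).toReal := by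
    intro E hE
    rw [hPF E hE]
    rw [integral_congr_ae (ae_restrict_of_ae hφφ')]
    rw [integral_eq_lintegral_of_nonneg_ae (ae_restrict_of_ae hφ'0)
      hφ'sm.aestronglyMeasurable.restrict]
  have htNset : ∀ (N : ℕ) (E : Set X), MeasurableSet E →
      ∫ x in E, (∑ i ∈ Finset.range N, gE i x).toReal ∂μ
        = (∑ i ∈ Finset.range N, ∫⁻ x in B.F ⁻¹' E ∩ B.R i, ψ x ∂μ).toReal := by
    intro N E hE
    rw [integral_toReal ((hSNm N).aemeasurable.restrict) (ae_restrict_of_ae (hSNfin N))]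
    congr 1
    rw [lintegral_finset_sum _ fun i _ => hgEm i]
    exact Finset.sum_congr rfl fun i _ => key i E hE
  have hPge : ∀ N, ∀ᵐ x ∂μ, (∑ i ∈ Finset.range N, gE i x).toReal ≤ P x := by
    intro N
    have hnn : 0 ≤ᵐ[μ] fun x => P x - (∑ i ∈ Finset.range N, gE i x).toReal := by
      refine ae_nonneg_of_forall_setIntegral_nonneg (hP.sub (htNint N)) ?_
      intro s hs hμs
      rw [integral_sub hP.integrableOn (htNint N).integrableOn]
      rw [hPset s hs, htNset N s hs, sub_nonneg]
      have hfin' : ∫⁻ x in B.F ⁻¹' s, ψ x ∂μ ≠ ∞ :=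
        ((setLIntegral_le_lintegral _ _).trans_lt hψtop.lt_top).ne
      exact ENNReal.toReal_mono hfin' (hL3 N _ (B.measF hs))
    filter_upwards [hnn] with x hx
    simpa [sub_nonneg] using hx
  have hfinal : ∀ N : ℕ, ∫ x, |P x - ∑ i ∈ Finset.range N,
        ((B.D i).indicator
          (fun x => Real.sqrt ((B.Φ i x).toReal) * Real.sqrt (φ (B.f i x))) x) ^ 2| ∂μ
      = (∫⁻ x, ψ x ∂μ).toReal - (∑ i ∈ Finset.range N, L i).toReal := by
    intro N
    have h1 : (fun x => |P x - ∑ i ∈ Finset.range N, ((B.D i).indicator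
          (fun x => Real.sqrt ((B.Φ i x).toReal) * Real.sqrt (φ (B.f i x))) x) ^ 2|)
        =ᵐ[μ] fun x => P x - (∑ i ∈ Finset.range N, gE i x).toReal := by
      filter_upwards [heq, hPge N] with x hx1 hx2
      rw [hx1 N]
      exact abs_of_nonneg (sub_nonneg.2 hx2)
    rw [integral_congr_ae h1, integral_sub hP (htNint N)]
    congr 1
    · have h := hPset univ MeasurableSet.univ
      simpa [Measure.restrict_univ, Set.preimage_univ] using h
    · have h := htNset N univ MeasurableSet.univ
      simp only [Set.preimage_univ, Set.univ_inter, Measure.restrict_univ] at h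
      rw [h]
  have hT : Filter.Tendsto (fun N => (∫⁻ x, ψ x ∂μ).toReal
      - (∑ i ∈ Finset.range N, L i).toReal) Filter.atTop (nhds 0) := by
    have h2 : Filter.Tendsto (fun N => (∑ i ∈ Finset.range N, L i).toReal) Filter.atTop
        (nhds (∫⁻ x, ψ x ∂μ).toReal) :=
      (ENNReal.tendsto_toReal hψtop).comp hLlim
    have h3 := (tendsto_const_nhds
      (x := (∫⁻ x, ψ x ∂μ).toReal) (f := (Filter.atTop : Filter ℕ))).sub h2
    simpa using h3
  exact hT.congr fun N => (hfinal N).symm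
end

section
/- Let A be an infinite 0-1 matrix in which every row has only finitely many 1's, and let ({f_i}, {D_i}, {R_i}, F) be an A_∞-branching system on (X,μ) with μ(R_i) < ∞ for each i and with each Radon–Nikodym derivative Φ_{f_i} constant on D_i, say Φ_{f_i} = b_i > 0. Then for each i: χ_{D_i} = Σ_{j : A(i,j)=1} χ_{R_j} μ-a.e., and P_F(χ_{R_z}) = b_z·χ_{D_z} = Σ_{j : A(z,j)=1} b_z·χ_{R_j} μ-a.e. Consequently, the restriction of the Perron–Frobenius operator to W = span{χ_{R_i} : i ∈ ℕ} maps W to W and has matrix representation AᵀB in the basis (χ_{R_i}), where B is the diagonal matrix with B_{i,i} = b_i. -/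
open MeasureTheory Set ENNReal

/-- if every row of A has finitely many 1's, μ(R_i) < ∞, and each Φ_{f_i}
is a positive constant b_i on D_i, then χ_{D_i} = Σ_{j : A(i,j)=1} χ_{R_j} μ-a.e., and
P_F(χ_{R_z}) = b_z·χ_{D_z} = Σ_{j : A(z,j)=1} b_z·χ_{R_j} μ-a.e.; hence P_F maps
W = span{χ_{R_i}} to W with matrix representation AᵀB, B = diag(b_i), i.e. the
coefficient of χ_{R_j} in P_F(χ_{R_z}) is (AᵀB)_{j,z} = A(z,j)·b_z. -/
theorem stmt14 {X : Type*} [MeasurableSpace X] (μ : Measure X) [SigmaFinite μ]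
    (A : ℕ → ℕ → ℕ) (hA01 : ∀ i j, A i j = 0 ∨ A i j = 1)
    (hfin : ∀ i, ({j | A i j = 1} : Set ℕ).Finite)
    (B : BranchingSystem μ A)
    (hRfin : ∀ i, μ (B.R i) < ∞)
    (b : ℕ → ℝ) (hb : ∀ i, 0 < b i)
    (hconst : ∀ i, ∀ x ∈ B.D i, B.Φ i x = ENNReal.ofReal (b i)) :
    -- χ_{D_i} = Σ_{j : A(i,j)=1} χ_{R_j}  μ-a.e.
    (∀ i, ∀ᵐ x ∂μ, (B.D i).indicator (fun _ => (1 : ℝ)) x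
        = ∑ j ∈ (hfin i).toFinset, (B.R j).indicator (fun _ => (1 : ℝ)) x) ∧
    -- P_F(χ_{R_z}) = b_z χ_{D_z} = Σ_{j : A(z,j)=1} (AᵀB)_{j,z} χ_{R_j}  μ-a.e.
    (∀ z : ℕ, ∀ P : X → ℝ, Integrable P μ →
      (∀ E : Set X, MeasurableSet E →
        ∫ x in E, P x ∂μ = ∫ x in B.F ⁻¹' E, (B.R z).indicator (fun _ => (1 : ℝ)) x ∂μ) →
      (P =ᵐ[μ] fun x => b z * (B.D z).indicator (fun _ => (1 : ℝ)) x) ∧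
      (P =ᵐ[μ] fun x => ∑ j ∈ (hfin z).toFinset,
        ((A z j : ℝ) * b z) * (B.R j).indicator (fun _ => (1 : ℝ)) x)) := by
  -- the union of the R_j with A i j = 1
  set U : ℕ → Set X := fun i => ⋃ j ∈ (hfin i).toFinset, B.R j with hU
  -- condition 5 specialised to U = {i}, V = ∅
  have hc5 : ∀ i, μ (B.D i \ U i) = 0 ∧ μ (U i \ B.D i) = 0 := by
    intro i
    have hset : {j | (∀ u ∈ ({i} : Finset ℕ), A u j = 1) ∧
        ∀ v ∈ (∅ : Finset ℕ), A v j = 0} = {j | A i j = 1} := by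
      ext j; simp
    have h := B.cond5 {i} ∅ (by rw [hset]; exact hfin i)
    have hD : ((⋂ u ∈ ({i} : Finset ℕ), B.D u) ∩ ⋂ v ∈ (∅ : Finset ℕ), (B.D v)ᶜ) = B.D i := by
      simp
    have hUeq : (⋃ j ∈ {j | (∀ u ∈ ({i} : Finset ℕ), A u j = 1) ∧
        ∀ v ∈ (∅ : Finset ℕ), A v j = 0}, B.R j) = U i := by
      rw [hset, hU]
      ext x
      simp [Set.Finite.mem_toFinset]
    rw [hD, hUeq] at h
    exact h
  -- a.e., membership in D i is equivalent to membership in exactly the union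
  have hmem : ∀ i, ∀ᵐ x ∂μ, (x ∈ B.D i ↔ ∃ j ∈ (hfin i).toFinset, x ∈ B.R j) := by
    intro i
    have h1 := measure_eq_zero_iff_ae_notMem.mp (hc5 i).1
    have h2 := measure_eq_zero_iff_ae_notMem.mp (hc5 i).2
    filter_upwards [h1, h2] with x hx1 hx2
    constructor
    · intro hx
      by_contra hc
      apply hx1
      refine ⟨hx, ?_⟩
      simp only [hU, Set.mem_iUnion]
      push_neg at hc ⊢
      exact fun j hj => hc j hj
    · intro ⟨j, hj, hxj⟩
      by_contra hc
      exact hx2 ⟨Set.mem_biUnion hj hxj, hc⟩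
  -- a.e., the R_j are pairwise disjoint
  have hdisj : ∀ᵐ x ∂μ, ∀ j k : ℕ, j ≠ k → ¬(x ∈ B.R j ∧ x ∈ B.R k) := by
    rw [ae_all_iff]
    intro j
    rw [ae_all_iff]
    intro k
    rcases eq_or_ne j k with rfl | hjk
    · filter_upwards with x h; exact absurd rfl h
    · have := measure_eq_zero_iff_ae_notMem.mp (B.disjoint j k hjk)
      filter_upwards [this] with x hx _ hmem
      exact hx ⟨hmem.1, hmem.2⟩
  -- Part 1
  have part1 : ∀ i, ∀ᵐ x ∂μ, (B.D i).indicator (fun _ => (1 : ℝ)) x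
      = ∑ j ∈ (hfin i).toFinset, (B.R j).indicator (fun _ => (1 : ℝ)) x := by
    intro i
    filter_upwards [hmem i, hdisj] with x hx hdx
    by_cases hxD : x ∈ B.D i
    · obtain ⟨j0, hj0, hxj0⟩ := hx.mp hxD
      rw [Set.indicator_of_mem hxD]
      rw [Finset.sum_eq_single_of_mem j0 hj0]
      · rw [Set.indicator_of_mem hxj0]
      · intro j hj hne
        apply Set.indicator_of_notMem
        intro hxj
        exact hdx j j0 hne ⟨hxj, hxj0⟩
    · rw [Set.indicator_of_notMem hxD]
      rw [Finset.sum_eq_zero]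
      intro j hj
      apply Set.indicator_of_notMem
      intro hxj
      exact hxD (hx.mpr ⟨j, hj, hxj⟩)
  refine ⟨part1, ?_⟩
  intro z P hPint hPeq
  -- μ (D z) < ∞
  have hDfin : μ (B.D z) < ∞ := by
    have hsub : B.D z ⊆ (B.D z \ U z) ∪ U z := fun x hx => by
      by_cases h : x ∈ U z
      · exact Or.inr h
      · exact Or.inl ⟨hx, h⟩
    calc μ (B.D z) ≤ μ (B.D z \ U z) + μ (U z) :=
          le_trans (measure_mono hsub) (measure_union_le _ _)
      _ = μ (U z) := by rw [(hc5 z).1, zero_add]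
      _ < ∞ := lt_of_le_of_lt (measure_biUnion_finset_le _ _)
          (ENNReal.sum_lt_top.mpr fun j _ => hRfin j)
  -- the good set G' where F ∘ f z = id
  obtain ⟨G', hG'meas, hG'sub, hG'inv, hG'null⟩ :
      ∃ G' : Set X, MeasurableSet G' ∧ G' ⊆ B.D z ∧ (∀ x ∈ G', B.F (B.f z x) = x) ∧
        μ (B.D z \ G') = 0 := by
    have h := B.left_inv z
    rw [ae_iff, Measure.restrict_apply' (B.measD z)] at h
    set N := toMeasurable μ ({x | ¬B.F (B.f z x) = x} ∩ B.D z) with hN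
    refine ⟨B.D z \ N, (B.measD z).diff (measurableSet_toMeasurable _ _), Set.diff_subset,
      ?_, ?_⟩
    · intro x hx
      by_contra hc
      exact hx.2 (subset_toMeasurable _ _ ⟨hc, hx.1⟩)
    · refine measure_mono_null (fun x hx => ?_) (by rw [measure_toMeasurable]; exact h)
      simp only [Set.mem_diff, Set.mem_setOf_eq, not_and, not_not] at hx ⊢
      exact hx.2 hx.1
  -- key measure identity
  have key : ∀ E : Set X, MeasurableSet E →
      μ (B.F ⁻¹' E ∩ B.R z) = ENNReal.ofReal (b z) * μ (E ∩ B.D z) := by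
    intro E hE
    have hEG'meas : MeasurableSet (E ∩ G') := hE.inter hG'meas
    have hEG'sub : E ∩ G' ⊆ B.D z := fun x hx => hG'sub hx.2
    -- μ of image computed by rn
    have himg : μ (B.f z '' (E ∩ G')) = ENNReal.ofReal (b z) * μ (E ∩ G') := by
      rw [B.rn z (E ∩ G') hEG'meas hEG'sub]
      rw [setLIntegral_congr_fun hEG'meas
        (fun x hx => hconst z x (hEG'sub hx))]
      rw [setLIntegral_const]
    have hEG'eq : μ (E ∩ G') = μ (E ∩ B.D z) := by
      apply measure_congr
      rw [ae_eq_set]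
      constructor
      · have h : (E ∩ G') \ (E ∩ B.D z) ⊆ (∅ : Set X) := by
          rintro x ⟨⟨hxE, hxG⟩, hx2⟩
          exact hx2 ⟨hxE, hG'sub hxG⟩
        exact measure_mono_null h measure_empty
      · have h : (E ∩ B.D z) \ (E ∩ G') ⊆ B.D z \ G' := by
          rintro x ⟨⟨hxE, hxD⟩, hx2⟩
          exact ⟨hxD, fun hG => hx2 ⟨hxE, hG⟩⟩
        exact measure_mono_null h hG'null
    -- null auxiliary sets
    have hnull1 : μ (B.f z '' B.D z \ B.R z) = 0 := (B.image_ae z).1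
    have hnull2 : μ (B.R z \ B.f z '' B.D z) = 0 := (B.image_ae z).2
    have hnull3 : μ (B.f z '' (B.D z \ G')) = 0 := by
      rw [B.rn z (B.D z \ G') ((B.measD z).diff hG'meas) Set.diff_subset]
      exact setLIntegral_measure_zero _ _ hG'null
    -- two inclusions
    have hle1 : μ (B.f z '' (E ∩ G')) ≤ μ (B.F ⁻¹' E ∩ B.R z) := by
      calc μ (B.f z '' (E ∩ G')) ≤ μ ((B.F ⁻¹' E ∩ B.R z) ∪ (B.f z '' B.D z \ B.R z)) := by
            apply measure_mono
            rintro y ⟨x, ⟨hxE, hxG'⟩, rfl⟩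
            by_cases hy : B.f z x ∈ B.R z
            · left
              exact ⟨by rw [Set.mem_preimage, hG'inv x hxG']; exact hxE, hy⟩
            · right
              exact ⟨Set.mem_image_of_mem _ (hG'sub hxG'), hy⟩
        _ ≤ μ (B.F ⁻¹' E ∩ B.R z) + μ (B.f z '' B.D z \ B.R z) := measure_union_le _ _
        _ = μ (B.F ⁻¹' E ∩ B.R z) := by rw [hnull1, add_zero]
    have hle2 : μ (B.F ⁻¹' E ∩ B.R z) ≤ μ (B.f z '' (E ∩ G')) := by
      calc μ (B.F ⁻¹' E ∩ B.R z)
          ≤ μ (B.f z '' (E ∩ G') ∪ ((B.R z \ B.f z '' B.D z) ∪ B.f z '' (B.D z \ G'))) := by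
            apply measure_mono
            rintro y ⟨hyE, hyR⟩
            by_cases hy : y ∈ B.f z '' B.D z
            · obtain ⟨x, hxD, rfl⟩ := hy
              by_cases hxG' : x ∈ G'
              · left
                refine ⟨x, ⟨?_, hxG'⟩, rfl⟩
                rw [Set.mem_preimage, hG'inv x hxG'] at hyE
                exact hyE
              · right; right
                exact Set.mem_image_of_mem _ ⟨hxD, hxG'⟩
            · right; left; exact ⟨hyR, hy⟩
        _ ≤ μ (B.f z '' (E ∩ G')) + (μ (B.R z \ B.f z '' B.D z) + μ (B.f z '' (B.D z \ G'))) :=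
            le_trans (measure_union_le _ _) (by gcongr; exact measure_union_le _ _)
        _ = μ (B.f z '' (E ∩ G')) := by rw [hnull2, hnull3, add_zero, add_zero]
    rw [le_antisymm hle2 hle1, himg, hEG'eq]
  -- integral identity for the candidate limit function
  have hQint : Integrable (fun x => b z * (B.D z).indicator (fun _ => (1 : ℝ)) x) μ := by
    have : Integrable ((B.D z).indicator (fun _ => (1 : ℝ))) μ :=
      (integrable_indicator_iff (B.measD z)).mpr ((integrableOn_const_iff).mpr (Or.inr hDfin))
    simpa using this.const_mul (b z)
  have hint_eq : ∀ E : Set X, MeasurableSet E →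
      ∫ x in E, P x ∂μ = ∫ x in E, b z * (B.D z).indicator (fun _ => (1 : ℝ)) x ∂μ := by
    intro E hE
    rw [hPeq E hE]
    rw [setIntegral_indicator (B.measR z)]
    rw [integral_const_mul, setIntegral_indicator (B.measD z)]
    simp only [setIntegral_const, smul_eq_mul, mul_one]
    rw [measureReal_def, measureReal_def, key E hE, ENNReal.toReal_mul, ENNReal.toReal_ofReal (hb z).le]
  have conc1 : P =ᵐ[μ] fun x => b z * (B.D z).indicator (fun _ => (1 : ℝ)) x := by
    refine ae_eq_of_forall_setIntegral_eq_of_sigmaFinite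
      (fun s hs _ => hPint.integrableOn) (fun s hs _ => hQint.integrableOn)
      (fun s hs _ => hint_eq s hs)
  refine ⟨conc1, ?_⟩
  filter_upwards [conc1, part1 z] with x hx1 hx2
  rw [hx1, hx2, Finset.mul_sum]
  apply Finset.sum_congr rfl
  intro j hj
  have : A z j = 1 := (hfin z).mem_toFinset.mp hj
  rw [this]
  push_cast
  ring
end

section
/- Let X = [0,2] with Lebesgue measure μ, D₁ = R₁ = [0,1], D₂ = R₂ = [1,2], F = id on [0,2], f_i = id on D_i, and A the 2×2 matrix with rows (1,1) and (1,0). Define operators S_i on L²(X,μ) by S_i(φ) = χ_{R_i}·φ (which equals χ_{R_i}·Φ_F^{1/2}·(φ∘F) since F = id). Then S₁*S₁ = M_{χ_{[0,1]}} while S₁S₁* + S₂S₂* = M_{χ_{[0,2]}}; in particular S₁*S₁ ≠ Σ_{j : A(1,j)=1} S_jS_j*, so the Cuntz–Krieger relation S_i*S_i = Σ_{j : A(i,j)=1} S_jS_j* fails for this data. -/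
open MeasureTheory Set ContinuousLinearMap
open scoped InnerProductSpace

lemma stmt18_aux_selfadj (μ : Measure ℝ) (s : Set ℝ) (S : Lp ℂ 2 μ →L[ℂ] Lp ℂ 2 μ)
    (hS : ∀ φ : Lp ℂ 2 μ, (S φ : ℝ → ℂ) =ᵐ[μ] s.indicator fun x => φ x) :
    ContinuousLinearMap.adjoint S = S := by
  refine ((ContinuousLinearMap.eq_adjoint_iff S S).mpr ?_).symm
  intro ψ φ
  rw [MeasureTheory.L2.inner_def, MeasureTheory.L2.inner_def]
  refine integral_congr_ae ?_
  filter_upwards [hS ψ, hS φ] with x h1 h2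
  rw [h1, h2]
  by_cases hx : x ∈ s <;>
    simp [Set.indicator_of_mem, Set.indicator_of_notMem, hx, RCLike.inner_apply]

lemma stmt18_aux_sum (x : ℝ) (hx : x ≠ 1) (c : ℂ) :
    (if x ∈ Set.Icc (0:ℝ) 1 then c else 0) + (if x ∈ Set.Icc (1:ℝ) 2 then c else 0)
      = (if x ∈ Set.Icc (0:ℝ) 2 then c else 0) := by
  simp only [Set.mem_Icc]
  rcases lt_or_ge x 1 with h | h
  · have hB : ¬(1 ≤ x ∧ x ≤ 2) := fun hh => absurd hh.1 (not_le.mpr h)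
    by_cases h0 : 0 ≤ x
    · rw [if_pos ⟨h0, h.le⟩, if_neg hB, if_pos ⟨h0, by linarith⟩, add_zero]
    · rw [if_neg (fun hh => h0 hh.1), if_neg hB, if_neg (fun hh => h0 hh.1), add_zero]
  · have h' : 1 < x := lt_of_le_of_ne h (Ne.symm hx)
    have hA : ¬(0 ≤ x ∧ x ≤ 1) := fun hh => absurd hh.2 (not_le.mpr h')
    by_cases h2 : x ≤ 2
    · rw [if_neg hA, if_pos ⟨h, h2⟩, if_pos ⟨by linarith, h2⟩, zero_add]
    · rw [if_neg hA, if_neg (fun hh => h2 hh.2), if_neg (fun hh => h2 hh.2), zero_add]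

/-- counterexample: on X = [0,2] with Lebesgue measure, with
R₁ = D₁ = [0,1], R₂ = D₂ = [1,2], F = id, f_i = id, the operators S_i(φ) = χ_{R_i}·φ
satisfy S₁*S₁ = M_{χ_{[0,1]}} and S₁S₁* + S₂S₂* = M_{χ_{[0,2]}}, so the Cuntz–Krieger
relation S₁*S₁ = S₁S₁* + S₂S₂* (from the matrix A with rows (1,1), (1,0)) fails. -/
theorem stmt18
    (μ : Measure ℝ) (hμ : μ = volume.restrict (Set.Icc (0 : ℝ) 2))
    (S₁ S₂ : Lp ℂ 2 μ →L[ℂ] Lp ℂ 2 μ)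
    (hS₁ : ∀ φ : Lp ℂ 2 μ,
      (S₁ φ : ℝ → ℂ) =ᵐ[μ] (Set.Icc (0 : ℝ) 1).indicator fun x => φ x)
    (hS₂ : ∀ φ : Lp ℂ 2 μ,
      (S₂ φ : ℝ → ℂ) =ᵐ[μ] (Set.Icc (1 : ℝ) 2).indicator fun x => φ x) :
    -- S₁*S₁ is multiplication by χ_{[0,1]}
    (∀ φ : Lp ℂ 2 μ, (ContinuousLinearMap.adjoint S₁ (S₁ φ) : ℝ → ℂ)
        =ᵐ[μ] (Set.Icc (0 : ℝ) 1).indicator fun x => φ x) ∧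
    -- S₁S₁* + S₂S₂* is multiplication by χ_{[0,2]}
    (∀ φ : Lp ℂ 2 μ,
      ((S₁ (ContinuousLinearMap.adjoint S₁ φ) + S₂ (ContinuousLinearMap.adjoint S₂ φ) : Lp ℂ 2 μ) : ℝ → ℂ)
        =ᵐ[μ] (Set.Icc (0 : ℝ) 2).indicator fun x => φ x) ∧
    -- hence the Cuntz–Krieger relation S₁*S₁ = Σ_{j : A(1,j)=1} S_jS_j* fails
    ContinuousLinearMap.adjoint S₁ ∘L S₁
      ≠ S₁ ∘L ContinuousLinearMap.adjoint S₁ + S₂ ∘L ContinuousLinearMap.adjoint S₂ := by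
  have hadj₁ : ContinuousLinearMap.adjoint S₁ = S₁ := stmt18_aux_selfadj μ _ S₁ hS₁
  have hadj₂ : ContinuousLinearMap.adjoint S₂ = S₂ := stmt18_aux_selfadj μ _ S₂ hS₂
  have part1 : ∀ φ : Lp ℂ 2 μ, (ContinuousLinearMap.adjoint S₁ (S₁ φ) : ℝ → ℂ)
      =ᵐ[μ] (Set.Icc (0 : ℝ) 1).indicator fun x => φ x := by
    intro φ
    rw [hadj₁]
    filter_upwards [hS₁ (S₁ φ), hS₁ φ] with x h1 h2
    rw [h1]
    by_cases hx : x ∈ Set.Icc (0 : ℝ) 1 <;>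
      simp [Set.indicator_of_mem, Set.indicator_of_notMem, hx, h2]
  have hone : ∀ᵐ x ∂μ, x ≠ (1 : ℝ) := by
    have h0 : μ ({(1 : ℝ)} : Set ℝ) = 0 := by
      rw [hμ]
      exact le_antisymm ((Measure.restrict_le_self _).trans_eq Real.volume_singleton)
        (zero_le)
    rw [ae_iff]
    simpa [Set.setOf_eq_eq_singleton] using h0
  have part2 : ∀ φ : Lp ℂ 2 μ,
      ((S₁ (ContinuousLinearMap.adjoint S₁ φ) + S₂ (ContinuousLinearMap.adjoint S₂ φ) : Lp ℂ 2 μ) : ℝ → ℂ)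
        =ᵐ[μ] (Set.Icc (0 : ℝ) 2).indicator fun x => φ x := by
    intro φ
    rw [hadj₁, hadj₂]
    filter_upwards [Lp.coeFn_add (S₁ (S₁ φ)) (S₂ (S₂ φ)), hS₁ (S₁ φ), hS₁ φ,
      hS₂ (S₂ φ), hS₂ φ, hone] with x hadd h1 h1' h2 h2' hx1
    have e1 : (S₁ (S₁ φ) : ℝ → ℂ) x = (Set.Icc (0:ℝ) 1).indicator (fun y => φ y) x := by
      rw [h1]
      by_cases hx : x ∈ Set.Icc (0 : ℝ) 1 <;>
        simp [Set.indicator_of_mem, Set.indicator_of_notMem, hx, h1']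
    have e2 : (S₂ (S₂ φ) : ℝ → ℂ) x = (Set.Icc (1:ℝ) 2).indicator (fun y => φ y) x := by
      rw [h2]
      by_cases hx : x ∈ Set.Icc (1 : ℝ) 2 <;>
        simp [Set.indicator_of_mem, Set.indicator_of_notMem, hx, h2']
    rw [hadd]
    simp only [Pi.add_apply, e1, e2, Set.indicator_apply]
    exact stmt18_aux_sum x hx1 (φ x)
  refine ⟨part1, part2, ?_⟩
  intro hEq
  subst hμ
  haveI : IsFiniteMeasure (volume.restrict (Set.Icc (0 : ℝ) 2)) := by
    constructor
    rw [Measure.restrict_apply_univ, Real.volume_Icc]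
    norm_num
  have hmem : MemLp (fun _ : ℝ => (1 : ℂ)) 2 (volume.restrict (Set.Icc (0 : ℝ) 2)) :=
    memLp_const 1
  set φ₀ : Lp ℂ 2 (volume.restrict (Set.Icc (0 : ℝ) 2)) := hmem.toLp _ with hφ₀
  have hc : (φ₀ : ℝ → ℂ) =ᵐ[volume.restrict (Set.Icc (0 : ℝ) 2)] fun _ => (1 : ℂ) :=
    hmem.coeFn_toLp
  have heq1 : ((ContinuousLinearMap.adjoint S₁ ∘L S₁) φ₀ : ℝ → ℂ)
      = ((S₁ ∘L ContinuousLinearMap.adjoint S₁ + S₂ ∘L ContinuousLinearMap.adjoint S₂) φ₀ : ℝ → ℂ) := by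
    rw [hEq]
  have h12 : (Set.Icc (0 : ℝ) 1).indicator (fun _ => (1 : ℂ))
      =ᵐ[volume.restrict (Set.Icc (0 : ℝ) 2)] (Set.Icc (0 : ℝ) 2).indicator (fun _ => (1 : ℂ)) := by
    filter_upwards [part1 φ₀, part2 φ₀, hc] with x a1 a2 hcx
    have key : (Set.Icc (0:ℝ) 1).indicator (fun y => (φ₀ : ℝ → ℂ) y) x
        = (Set.Icc (0:ℝ) 2).indicator (fun y => (φ₀ : ℝ → ℂ) y) x := by
      rw [← a1, ← a2]
      have := congrFun heq1 x
      simpa [ContinuousLinearMap.comp_apply, ContinuousLinearMap.add_apply] using this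
    simp only [Set.indicator_apply, hcx] at key ⊢
    exact key
  have hIoc1 : (volume.restrict (Set.Icc (0 : ℝ) 2)) (Set.Ioc (1:ℝ) 2) = 1 := by
    have hsub : Set.Ioc (1:ℝ) 2 ⊆ Set.Icc (0:ℝ) 2 := fun y hy => by
      simp only [Set.mem_Ioc] at hy
      exact ⟨by linarith [hy.1], hy.2⟩
    rw [Measure.restrict_apply measurableSet_Ioc, Set.inter_eq_left.mpr hsub]
    rw [Real.volume_Ioc]
    norm_num
  have hIoc0 : (volume.restrict (Set.Icc (0 : ℝ) 2)) (Set.Ioc (1:ℝ) 2) = 0 := by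
    rw [Filter.EventuallyEq, ae_iff] at h12
    refine measure_mono_null (fun x hx => ?_) h12
    simp only [Set.mem_Ioc] at hx
    simp only [Set.mem_setOf_eq, Set.indicator_apply, Set.mem_Icc]
    rw [if_neg (by intro hh; linarith [hx.1, hh.2]), if_pos ⟨by linarith [hx.1], hx.2⟩]
    exact zero_ne_one
  rw [hIoc0] at hIoc1
  exact one_ne_zero hIoc1.symm
end
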